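/- arXiv:1102.2927 — 3 statements merged into one kernel-verified Lean document; each statement's English description precedes it below -/
import Mathlib

section
/- For every undirected graph H on a finite vertex set N and every pairwise disjoint triplet (A,B,C) of subsets of N belonging to M_H (i.e., C separates A from B in H), there exists a minimal triangulation H' of H such that (A,B,C) belongs to M_{H'}. -/
open scoped Classical BigOperators

variable {V : Type} [Fintype V] [DecidableEq V]

/-! ### Imsets -/

abbrev Imset (V : Type) := Finset V → ℤ

noncomputable def deltaIm (A : Finset V) : Imset V := fun B => if B = A then 1 else 0

noncomputable def semiElem (A B C : Finset V) : Imset V :=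
  deltaIm (A ∪ B ∪ C) + deltaIm C - deltaIm (A ∪ C) - deltaIm (B ∪ C)

def ElemValid (a b : V) (C : Finset V) : Prop := a ≠ b ∧ a ∉ C ∧ b ∉ C

noncomputable def elemOf (t : V × V × Finset V) : Imset V :=
  semiElem {t.1} {t.2.1} t.2.2

/-- A combinatorial imset: a nonnegative integer combination of elementary imsets. -/
def IsCombinatorial (u : Imset V) : Prop :=
  ∃ n : V × V × Finset V → ℕ,
    (∀ t, n t ≠ 0 → ElemValid t.1 t.2.1 t.2.2) ∧
    u = ∑ t : V × V × Finset V, (n t : ℤ) • elemOf t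

/-- A structural imset: an (integer-valued) element of the convex cone
generated by the elementary imsets. -/
def IsStructural (u : Imset V) : Prop :=
  ∃ c : V × V × Finset V → ℝ,
    (∀ t, 0 ≤ c t) ∧ (∀ t, c t ≠ 0 → ElemValid t.1 t.2.1 t.2.2) ∧
    ∀ A : Finset V, (u A : ℝ) = ∑ t : V × V × Finset V, c t * ((elemOf t) A : ℝ)

def DisjointTriple (A B C : Finset V) : Prop :=
  Disjoint A B ∧ Disjoint A C ∧ Disjoint B C

/-- The conditional independence statement induced by a (structural) imset. -/
def imsetCI (u : Imset V) (A B C : Finset V) : Prop :=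
  ∃ k : ℕ, IsStructural ((k : ℤ) • u - semiElem A B C)

/-! ### Undirected graph notions, relative to a vertex set `W` -/

def WalkIn (W : Finset V) {G : SimpleGraph V} {u v : V} (p : G.Walk u v) : Prop :=
  ∀ x ∈ p.support, x ∈ W

/-- `C` separates `A` from `B` in the subgraph of `G` induced on `W`. -/
def SeparatesIn (G : SimpleGraph V) (W A B C : Finset V) : Prop :=
  ∀ a ∈ A, ∀ b ∈ B, ∀ p : G.Walk a b, WalkIn W p → ∃ c ∈ C, c ∈ p.support

/-- The subgraph of `G` induced on `W` is chordal: every cycle of length ≥ 4 within `W`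
has a chord. -/
def ChordalIn (G : SimpleGraph V) (W : Finset V) : Prop :=
  ∀ (v : V) (p : G.Walk v v), p.IsCycle → WalkIn W p → 4 ≤ p.length →
    ∃ a b, a ∈ p.support ∧ b ∈ p.support ∧ G.Adj a b ∧ s(a, b) ∉ p.edges

def EdgesWithin (G : SimpleGraph V) (W : Finset V) : Prop :=
  ∀ a b, G.Adj a b → a ∈ W ∧ b ∈ W

/-- `G` is a triangulation of (the subgraph of) `H` (induced on `W`): a decomposable
(chordal) graph on the vertex set `W` containing all the edges of `H` within `W`. -/
def IsTriangulationIn (H : SimpleGraph V) (W : Finset V) (G : SimpleGraph V) : Prop :=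
  EdgesWithin G W ∧ (∀ a b, H.Adj a b → a ∈ W → b ∈ W → G.Adj a b) ∧ ChordalIn G W

/-- A minimal triangulation: no triangulation has a strictly smaller edge set. -/
def IsMinTriIn (H : SimpleGraph V) (W : Finset V) (G : SimpleGraph V) : Prop :=
  IsTriangulationIn H W G ∧ ∀ G', IsTriangulationIn H W G' → ¬ G' < G

/-- `𝔗(H_W)`, the set of minimal triangulations. -/
def minTris (H : SimpleGraph V) (W : Finset V) : Set (SimpleGraph V) :=
  {G | IsMinTriIn H W G}

/-- The induced subgraph on `W`, kept as a graph on the ambient vertex type. -/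
def inducedSG (G : SimpleGraph V) (W : Finset V) : SimpleGraph V where
  Adj a b := G.Adj a b ∧ a ∈ W ∧ b ∈ W
  symm := ⟨fun a b h => ⟨h.1.symm, h.2.2, h.2.1⟩⟩
  loopless := ⟨fun a h => G.loopless.irrefl a h.1⟩

/-- Maximal cliques of the subgraph induced on `W`. -/
def IsMaxCliqueIn (G : SimpleGraph V) (W K : Finset V) : Prop :=
  K ⊆ W ∧ G.IsClique (K : Set V) ∧
    ∀ K' : Finset V, K' ⊆ W → G.IsClique (K' : Set V) → K ⊆ K' → K = K'

def ReachIn (G : SimpleGraph V) (W : Finset V) (u v : V) : Prop :=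
  ∃ p : G.Walk u v, WalkIn W p

/-- `S` is a `(u,v)`-separator in the subgraph induced on `W`. -/
def SepPairIn (G : SimpleGraph V) (W S : Finset V) (u v : V) : Prop :=
  u ∈ W ∧ v ∈ W ∧ u ∉ S ∧ v ∉ S ∧
    ∀ p : G.Walk u v, WalkIn W p → ∃ s ∈ S, s ∈ p.support

/-- A clique separator of the subgraph induced on `W`. -/
def IsCliqueSepIn (G : SimpleGraph V) (W S : Finset V) : Prop :=
  S ⊆ W ∧ G.IsClique (S : Set V) ∧ ∃ u v, ReachIn G W u v ∧ SepPairIn G W S u v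

/-- The subgraph induced on `W` is prime: it has no clique separator. -/
def IsPrimeIn (G : SimpleGraph V) (W : Finset V) : Prop :=
  ¬ ∃ S, IsCliqueSepIn G W S

/-- `U` is a maximal prime component of the subgraph induced on `W`. -/
def IsMpCompIn (G : SimpleGraph V) (W U : Finset V) : Prop :=
  U ⊆ W ∧ IsPrimeIn G U ∧ ∀ U', U' ⊆ W → IsPrimeIn G U' → U ⊆ U' → U = U'

/-- `S` is a minimal vertex separator of the subgraph induced on `W`. -/
def IsMinVtxSepIn (G : SimpleGraph V) (W S : Finset V) : Prop :=
  S ⊆ W ∧ ∃ u v, SepPairIn G W S u v ∧ ∀ S', S' ⊂ S → ¬ SepPairIn G W S' u v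

/-- The set of clique minimal vertex separators of the subgraph induced on `W`. -/
def cmvs (G : SimpleGraph V) (W : Finset V) : Set (Finset V) :=
  {S | G.IsClique (S : Set V) ∧ IsMinVtxSepIn G W S}

/-! ### Running intersection orderings and standard imsets -/

def unionTake (l : List (Finset V)) (i : ℕ) : Finset V :=
  (l.take i).foldr (· ∪ ·) ∅

def sepAt (l : List (Finset V)) (i : ℕ) : Finset V :=
  l.getD i ∅ ∩ unionTake l i

/-- `l` is an ordering, with the running intersection property, of the family `F`. -/
def IsRIPList (F : Finset V → Prop) (l : List (Finset V)) : Prop :=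
  l.Nodup ∧ (∀ X, X ∈ l ↔ F X) ∧
    ∀ i, 0 < i → i < l.length → ∃ k, k < i ∧ sepAt l i ⊆ l.getD k ∅

noncomputable def ripList (F : Finset V → Prop) : List (Finset V) :=
  if h : ∃ l, IsRIPList F l then h.choose else []

/-- The multiplicity `ν(S)`: the number of indices `i ≥ 1` with `S_i = S` in a
running intersection ordering of the family `F`. -/
noncomputable def nuOf (F : Finset V → Prop) (S : Finset V) : ℕ :=
  (List.range (ripList F).length).countP
    (fun i => decide (0 < i ∧ sepAt (ripList F) i = S))

/-- The standard imset of a decomposable graph (induced on `W`),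
`u_G = δ_W − Σ_{K ∈ K_G} δ_K + Σ_{S ∈ S_G} ν_G(S)·δ_S`. -/
noncomputable def uDec (G : SimpleGraph V) (W : Finset V) : Imset V :=
  deltaIm W - (∑ᶠ K ∈ {K : Finset V | IsMaxCliqueIn G W K}, deltaIm K)
    + ∑ᶠ S ∈ cmvs G W, (nuOf (IsMaxCliqueIn G W) S : ℤ) • deltaIm S

/-- The standard imset of a general undirected graph (induced on `W`). -/
noncomputable def uUG (G : SimpleGraph V) (W : Finset V) : Imset V :=
  deltaIm W - (∑ᶠ U ∈ {U : Finset V | IsMpCompIn G W U}, deltaIm U)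
    + (∑ᶠ S ∈ cmvs G W, (nuOf (IsMpCompIn G W) S : ℤ) • deltaIm S)
    + ∑ᶠ U ∈ {U : Finset V | IsMpCompIn G W U},
        ∑ᶠ G' ∈ minTris (inducedSG G U) U, uDec G' U

/-! ### Chain graphs -/

/-- A mixed graph: `Adj a b ∧ Adj b a` is an undirected edge `a — b`,
`Adj a b ∧ ¬ Adj b a` is a directed edge `a → b`. -/
structure MixedGraph (V : Type) where
  Adj : V → V → Prop
  irrefl : ∀ a, ¬ Adj a a

def MixedGraph.UndirEdge (G : MixedGraph V) (a b : V) : Prop := G.Adj a b ∧ G.Adj b a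

def MixedGraph.DirEdge (G : MixedGraph V) (a b : V) : Prop := G.Adj a b ∧ ¬ G.Adj b a

/-- A chain graph: no directed cycles (no cycle containing a directed edge). -/
def IsChainGraph (G : MixedGraph V) : Prop :=
  ∀ a b, G.DirEdge a b → ¬ Relation.ReflTransGen G.Adj b a

/-- The underlying (undirected) graph of a mixed graph. -/
def MixedGraph.underlying (G : MixedGraph V) : SimpleGraph V where
  Adj a b := a ≠ b ∧ (G.Adj a b ∨ G.Adj b a)
  symm := by
    constructor
    intro a b h
    exact ⟨h.1.symm, h.2.symm⟩
  loopless := ⟨fun a h => h.1 rfl⟩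

/-- The undirected part of a mixed graph. -/
def MixedGraph.ugPart (G : MixedGraph V) : SimpleGraph V where
  Adj a b := G.Adj a b ∧ G.Adj b a
  symm := ⟨fun a b h => ⟨h.2, h.1⟩⟩
  loopless := ⟨fun a h => G.irrefl a h.1⟩

/-- The chain component containing `v` : the connectivity component of `v`
after removing all directed edges. -/
noncomputable def chainComp (G : MixedGraph V) (v : V) : Finset V :=
  Finset.univ.filter fun u => (MixedGraph.ugPart G).Reachable v u

/-- The set of chain components. -/
noncomputable def chainComps (G : MixedGraph V) : Finset (Finset V) :=
  Finset.univ.image (chainComp G)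

/-- The parent set of `C`: vertices outside `C` with a directed edge into `C`. -/
noncomputable def paSet (G : MixedGraph V) (C : Finset V) : Finset V :=
  Finset.univ.filter fun a => a ∉ C ∧ ∃ b ∈ C, G.DirEdge a b

/-- The ancestral set of `K`. -/
noncomputable def anSet (G : MixedGraph V) (K : Finset V) : Finset V :=
  Finset.univ.filter fun a => ∃ k ∈ K, Relation.ReflTransGen G.Adj a k

/-- The induced sub-mixed-graph on `W` (on the ambient vertex type). -/
def inducedM (G : MixedGraph V) (W : Finset V) : MixedGraph V where
  Adj a b := G.Adj a b ∧ a ∈ W ∧ b ∈ W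
  irrefl := fun a h => G.irrefl a h.1

/-- The moral graph: the underlying graph together with edges joining any two
vertices that are parents of a common chain component. -/
noncomputable def moralG (G : MixedGraph V) : SimpleGraph V where
  Adj a b := a ≠ b ∧
    (G.Adj a b ∨ G.Adj b a ∨ ∃ C ∈ chainComps G, a ∈ paSet G C ∧ b ∈ paSet G C)
  symm := by
    constructor
    intro a b h
    refine ⟨h.1.symm, ?_⟩
    rcases h.2 with h' | h' | ⟨C, hC, ha, hb⟩
    · exact Or.inr (Or.inl h')
    · exact Or.inl h'
    · exact Or.inr (Or.inr ⟨C, hC, hb, ha⟩)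
  loopless := ⟨fun a h => h.1 rfl⟩

/-- The closure graph `clo_H(C) = (H_{C ∪ pa(C)})^mor`. -/
noncomputable def clo (G : MixedGraph V) (C : Finset V) : SimpleGraph V :=
  moralG (inducedM G (C ∪ paSet G C))

/-- The separation criterion for chain graphs:
`C` separates `A` from `B` in `(H_{an(A∪B∪C)})^mor`. -/
noncomputable def cgCI (G : MixedGraph V) (A B C : Finset V) : Prop :=
  SeparatesIn (moralG (inducedM G (anSet G (A ∪ B ∪ C)))) Finset.univ A B C

/-- Two mixed graphs are (Markov) equivalent if they induce the same independence model. -/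
noncomputable def CGEquiv (G H : MixedGraph V) : Prop :=
  ∀ A B C : Finset V, DisjointTriple A B C → (cgCI G A B C ↔ cgCI H A B C)

/-- A directed acyclic graph: all edges directed, no directed cycles. -/
def IsDAG (G : MixedGraph V) : Prop :=
  (∀ a b, G.Adj a b → ¬ G.Adj b a) ∧ IsChainGraph G

/-- A triangulation of a chain graph `H`: a chain graph containing every undirected and
every directed edge of `H` which is equivalent to some directed acyclic graph. -/
noncomputable def IsCGTri (H G : MixedGraph V) : Prop :=
  IsChainGraph G ∧
  (∀ a b, H.UndirEdge a b → G.UndirEdge a b) ∧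
  (∀ a b, H.DirEdge a b → G.DirEdge a b) ∧
  ∃ D : MixedGraph V, IsDAG D ∧ CGEquiv G D

def mEdges (G : MixedGraph V) : Set (V × V) := {p | G.Adj p.1 p.2}

/-- A minimal triangulation of the chain graph `H`: no triangulation of `H`
has a strictly smaller edge set. -/
noncomputable def IsCGMinTri (H G : MixedGraph V) : Prop :=
  IsCGTri H G ∧ ∀ G', IsCGTri H G' → ¬ mEdges G' ⊂ mEdges G

/-- The standard imset of a chain graph. -/
noncomputable def uCG (H : MixedGraph V) : Imset V :=
  deltaIm Finset.univ - deltaIm ∅ +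
    ∑ C ∈ chainComps H,
      (deltaIm (paSet H C) - deltaIm (C ∪ paSet H C) + uUG (clo H C) (C ∪ paSet H C))

/-- `U ⇒ L` is a meta-arrow. -/
def MetaArrow (H : MixedGraph V) (U L : Finset V) : Prop :=
  U ∈ chainComps H ∧ L ∈ chainComps H ∧ U ≠ L ∧ ∃ a ∈ U, ∃ b ∈ L, H.DirEdge a b

/-- The graph obtained by merging the meta-arrow `U ⇒ L`: every directed edge from `U`
to `L` is replaced by an undirected edge. -/
def mergeGraph (H : MixedGraph V) (U L : Finset V) : MixedGraph V where
  Adj x y := H.Adj x y ∨ (H.DirEdge y x ∧ y ∈ U ∧ x ∈ L)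
  irrefl := fun a h => by
    rcases h with h | ⟨⟨h, _⟩, _⟩ <;> exact H.irrefl a h

/-- Feasibility of merging the meta-arrow `U ⇒ L`. -/
def FeasibleMerge (H : MixedGraph V) (U L : Finset V) : Prop :=
  MetaArrow H U L ∧
  (MixedGraph.underlying H).IsClique ((paSet H L ∩ U : Finset V) : Set V) ∧
  ∀ b ∈ paSet H L ∩ U, paSet H L \ U ⊆ paSet H ({b} : Finset V)

/-!
Let `X` be the set of vertices reachable from `A` without meeting `C`, and let `G` be the
union of the complete graphs on `X ∪ C` and on the complement of `X`: two cliques glued along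
`C`. No edge of `H` leaves `X` except into `C`, so `H ≤ G`, and `C` separates `A` from `B` in
`G`. `G` is chordal: a cycle meeting both `X` and the complement of `X ∪ C` passes through `C`,
and a vertex of `C` is adjacent to all other vertices, which a chordless cycle of length `≥ 4`
does not allow. Separation survives the deletion of edges, so every minimal triangulation of
`H` below `G` works.
-/

namespace SimpleGraph

variable {α : Type*}

def cliqueUnion (P Q : Set α) : SimpleGraph α where
  Adj a b := a ≠ b ∧ ((a ∈ P ∧ b ∈ P) ∨ (a ∈ Q ∧ b ∈ Q))
  symm := ⟨fun _ _ ⟨hne, h⟩ => ⟨hne.symm, h.imp And.symm And.symm⟩⟩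
  loopless := ⟨fun _ h => h.1 rfl⟩

variable {P Q : Set α}

theorem cliqueUnion_adj_of_mem_inter (hcover : ∀ z, z ∈ P ∨ z ∈ Q) {c w : α}
    (hc : c ∈ P ∩ Q) (hw : w ≠ c) : (cliqueUnion P Q).Adj c w :=
  ⟨hw.symm, (hcover w).imp (⟨hc.1, ·⟩) (⟨hc.2, ·⟩)⟩

theorem Walk.exists_mem_inter_of_cliqueUnion :
    ∀ {u w : α} (p : (cliqueUnion P Q).Walk u w), u ∈ P → u ∉ Q → w ∉ P →
      ∃ z ∈ p.support, z ∈ P ∩ Q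
  | _, _, .nil, hu, _, hw => absurd hu hw
  | _, _, .cons (v := b) hadj q, _, huQ, hw => by
    obtain ⟨_, ⟨-, hb⟩ | ⟨hu, -⟩⟩ := hadj
    · by_cases hbQ : b ∈ Q
      · exact ⟨b, List.mem_cons_of_mem _ q.start_mem_support, hb, hbQ⟩
      · obtain ⟨z, hz, hzPQ⟩ := exists_mem_inter_of_cliqueUnion q hb hbQ hw
        exact ⟨z, List.mem_cons_of_mem _ hz, hzPQ⟩
    · exact absurd hu huQ

theorem Walk.IsCycle.length_le_three_of_forall_adj {G : SimpleGraph α} {u c : α}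
    {p : G.Walk u u} (hp : p.IsCycle)
    (hchordless : ∀ a b, a ∈ p.support → b ∈ p.support → G.Adj a b → s(a, b) ∈ p.edges)
    (hc : c ∈ p.support) (hadj : ∀ w ∈ p.support, w ≠ c → G.Adj c w) : p.length ≤ 3 := by
  have hsub : (p.support.tail.toFinset.erase c : Set α) ⊆ p.toSubgraph.neighborSet c := by
    intro w hw
    simp only [Finset.coe_erase, List.coe_toFinset, Set.mem_sdiff, Set.mem_ofPred_eq,
      Set.mem_singleton_iff] at hw
    have hw' := List.mem_of_mem_tail hw.1
    exact adj_toSubgraph_iff_mem_edges.mpr (hchordless c w hc hw' (hadj w hw' hw.2))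
  -- `c` has only its two cycle-neighbours among the vertices of a chordless cycle
  have htwo := hp.ncard_neighborSet_toSubgraph_eq_two hc
  have hle := Set.ncard_le_ncard hsub (Set.finite_of_ncard_ne_zero (by omega))
  rw [htwo, Set.ncard_coe_finset] at hle
  have hcard : p.support.tail.toFinset.card = p.length := by
    rw [List.toFinset_card_of_nodup hp.support_nodup, List.length_tail, length_support]
    rfl
  have := Finset.pred_card_le_card_erase (s := p.support.tail.toFinset) (a := c)
  omega

end SimpleGraph

open SimpleGraph

section

variable {α : Type} {P Q : Set α}

theorem chordalIn_cliqueUnion (hcover : ∀ z, z ∈ P ∨ z ∈ Q) (W : Finset α) :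
    ChordalIn (cliqueUnion P Q) W := by
  intro v p hp _ hlen
  by_contra! hchordless
  suffices ∃ c ∈ p.support, ∀ w ∈ p.support, w ≠ c → (cliqueUnion P Q).Adj c w by
    obtain ⟨c, hc, hadj⟩ := this
    have := hp.length_le_three_of_forall_adj hchordless hc hadj
    omega
  by_cases hsupP : ∀ w ∈ p.support, w ∈ P
  · exact ⟨v, p.start_mem_support, fun w hw hne =>
      ⟨hne.symm, Or.inl ⟨hsupP v p.start_mem_support, hsupP w hw⟩⟩⟩
  by_cases hsupQ : ∀ w ∈ p.support, w ∈ Q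
  · exact ⟨v, p.start_mem_support, fun w hw hne =>
      ⟨hne.symm, Or.inr ⟨hsupQ v p.start_mem_support, hsupQ w hw⟩⟩⟩
  push Not at hsupP hsupQ
  obtain ⟨y, hy, hyP⟩ := hsupP
  obtain ⟨x, hx, hxQ⟩ := hsupQ
  -- the arc of the cycle from `x ∈ P \ Q` to `y ∉ P` passes through `P ∩ Q`
  obtain ⟨c, hc, hcPQ⟩ := ((p.takeUntil x hx).reverse.append (p.takeUntil y hy))
    |>.exists_mem_inter_of_cliqueUnion ((hcover x).resolve_right hxQ) hxQ hyP
  refine ⟨c, ?_, fun w _ hw => cliqueUnion_adj_of_mem_inter hcover hcPQ hw⟩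
  rw [Walk.support_append, Walk.support_reverse] at hc
  rcases List.mem_append.mp hc with hc | hc
  · exact p.support_takeUntil_subset_support hx (List.mem_reverse.mp hc)
  · exact p.support_takeUntil_subset_support hy (List.mem_of_mem_tail hc)

theorem isTriangulationIn_cliqueUnion [Fintype α] {H : SimpleGraph α}
    (hcover : ∀ z, z ∈ P ∨ z ∈ Q) (hle : H ≤ cliqueUnion P Q) :
    IsTriangulationIn H Finset.univ (cliqueUnion P Q) :=
  ⟨fun a b _ => ⟨Finset.mem_univ a, Finset.mem_univ b⟩, fun _ _ h _ _ => hle h,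
    chordalIn_cliqueUnion hcover _⟩

theorem SeparatesIn.mono {G G' : SimpleGraph α} {W A B C : Finset α}
    (h : SeparatesIn G W A B C) (hle : G' ≤ G) : SeparatesIn G' W A B C := by
  intro a ha b hb p hp
  rw [← Walk.support_mapLe_eq_support hle p]
  exact h a ha b hb (p.mapLe hle) (by rwa [WalkIn, Walk.support_mapLe_eq_support])

theorem exists_isMinTriIn_le [Finite α] {H G : SimpleGraph α} {W : Finset α}
    (hG : IsTriangulationIn H W G) : ∃ G' ≤ G, IsMinTriIn H W G' := by
  obtain ⟨G', ⟨hG', hle⟩, hmin⟩ :=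
    wellFounded_lt.has_min {G' | IsTriangulationIn H W G' ∧ G' ≤ G} ⟨G, hG, le_rfl⟩
  exact ⟨G', hle, hG', fun G'' hG'' hlt => hmin G'' ⟨hG'', hlt.le.trans hle⟩ hlt⟩

def reachableAvoiding (H : SimpleGraph α) (A C : Finset α) : Set α :=
  {x | ∃ a ∈ A, ∃ p : H.Walk a x, ∀ y ∈ p.support, y ∉ C}

variable {H : SimpleGraph α} {A C : Finset α}

theorem mem_reachableAvoiding_of_adj {x y : α} (hx : x ∈ reachableAvoiding H A C)
    (hxy : H.Adj x y) (hy : y ∉ C) : y ∈ reachableAvoiding H A C := by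
  obtain ⟨a, ha, p, hp⟩ := hx
  refine ⟨a, ha, p.concat hxy, fun z hz => ?_⟩
  rw [Walk.support_concat, List.mem_append, List.mem_singleton] at hz
  exact hz.elim (hp z) (· ▸ hy)

theorem le_cliqueUnion_reachableAvoiding :
    H ≤ cliqueUnion (reachableAvoiding H A C ∪ C) (reachableAvoiding H A C)ᶜ := by
  intro a b hab
  refine ⟨hab.ne, ?_⟩
  by_cases ha : a ∈ reachableAvoiding H A C
  · by_cases hb : b ∈ C
    · exact Or.inl ⟨Or.inl ha, Or.inr hb⟩
    · exact Or.inl ⟨Or.inl ha, Or.inl (mem_reachableAvoiding_of_adj ha hab hb)⟩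
  · by_cases hb : b ∈ reachableAvoiding H A C
    · by_cases haC : a ∈ C
      · exact Or.inl ⟨Or.inr haC, Or.inl hb⟩
      · exact absurd (mem_reachableAvoiding_of_adj hb hab.symm haC) ha
    · exact Or.inr ⟨ha, hb⟩

theorem separatesIn_cliqueUnion_reachableAvoiding [Fintype α] {B : Finset α}
    (hsep : SeparatesIn H Finset.univ A B C) :
    SeparatesIn (cliqueUnion (reachableAvoiding H A C ∪ C)
      (reachableAvoiding H A C)ᶜ) Finset.univ A B C := by
  intro a ha b hb p _
  by_cases haC : a ∈ C
  · exact ⟨a, haC, p.start_mem_support⟩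
  by_cases hbC : b ∈ C
  · exact ⟨b, hbC, p.end_mem_support⟩
  have haX : a ∈ reachableAvoiding H A C :=
    ⟨a, ha, .nil, fun y hy => by rwa [List.mem_singleton.mp hy]⟩
  have hbX : b ∉ reachableAvoiding H A C := fun ⟨a', ha', q, hq⟩ =>
    let ⟨c, hc, hcq⟩ := hsep a' ha' b hb q fun x _ => Finset.mem_univ x
    hq c hcq hc
  obtain ⟨z, hz, hzX | hzC, hzX'⟩ :=
    p.exists_mem_inter_of_cliqueUnion (Or.inl haX) (not_not.mpr haX) (by simp [hbX, hbC])
  · exact absurd hzX hzX'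
  · exact ⟨z, hzC, hz⟩

end

theorem exists_minimal_triangulation_separating_general
    {V : Type} [Fintype V] (H : SimpleGraph V) (A B C : Finset V)
    (hsep : SeparatesIn H Finset.univ A B C) :
    ∃ H' : SimpleGraph V, IsMinTriIn H Finset.univ H' ∧
      SeparatesIn H' Finset.univ A B C := by
  have hcover : ∀ z, z ∈ reachableAvoiding H A C ∪ C ∨ z ∈ (reachableAvoiding H A C)ᶜ :=
    fun z => (em _).imp Or.inl id
  obtain ⟨H', hle, hmin⟩ := exists_isMinTriIn_le
    (isTriangulationIn_cliqueUnion hcover le_cliqueUnion_reachableAvoiding)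
  exact ⟨H', hmin, (separatesIn_cliqueUnion_reachableAvoiding hsep).mono hle⟩

/-- For every undirected graph `H` and every pairwise disjoint triplet
`(A,B,C)` belonging to `M_H`, there is a minimal triangulation `H'` of `H`
with `(A,B,C) ∈ M_{H'}`. -/
theorem exists_minimal_triangulation_separating
    {V : Type} [Fintype V] [DecidableEq V] (H : SimpleGraph V) (A B C : Finset V)
    (hABC : DisjointTriple A B C)
    (hsep : SeparatesIn H Finset.univ A B C) :
    ∃ H' : SimpleGraph V, IsMinTriIn H Finset.univ H' ∧
      SeparatesIn H' Finset.univ A B C :=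
  exists_minimal_triangulation_separating_general H A B C hsep
end

section
/- Let H be an undirected graph on a finite vertex set N, and let H' be a graph on N with E(H) ⊆ E(H') such that every edge of E(H') ∖ E(H) joins two vertices lying in a common mp-component of H, and for each mp-component V of H the induced subgraph H'_V is a minimal triangulation of H_V. Then H' is a minimal triangulation of H. -/
open scoped Classical BigOperators

variable {V : Type} [Fintype V] [DecidableEq V]

/-! Chordality of `H'`. A minimal triangulation only adds edges inside connected components, so
every edge of `H'` joins two vertices connected inside a prime set of `H`; since a clique cannot
separate two vertices of a prime set, walks of `H'` avoiding a clique `S` of `H` can be replaced by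
walks of `H` avoiding `S`. Let `C` be a cycle of length at least 4 in `H'`. If some clique `S` of
`H` separates two vertices of `C` in `H`, then `S` meets both arcs of `C` between them, and two such
vertices of `S` form a chord. Otherwise no clique separates two vertices of `C`, so `C` lies in a
prime set, hence in an mp-component `U`, and `H'_U` is chordal.

Minimality. An edge of `H'` missing from a triangulation `G < H'` is not an edge of `H`, so it lies
in an mp-component `U`, and `G_U` is then a triangulation of `H_U` strictly below `H'_U`. -/

open SimpleGraph Finset

section Reach

variable {V : Type} {G H : SimpleGraph V} {W W' : Finset V} {u v w : V}

theorem ReachIn.left_mem (h : ReachIn G W u v) : u ∈ W :=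
  h.elim fun p hp => hp u p.start_mem_support

theorem ReachIn.right_mem (h : ReachIn G W u v) : v ∈ W :=
  h.elim fun p hp => hp v p.end_mem_support

theorem ReachIn.refl (hu : u ∈ W) : ReachIn G W u u :=
  ⟨.nil, by simpa [WalkIn]⟩

theorem ReachIn.of_adj (h : G.Adj u v) (hu : u ∈ W) (hv : v ∈ W) : ReachIn G W u v :=
  ⟨h.toWalk, by simp [WalkIn, hu, hv]⟩

theorem ReachIn.symm (h : ReachIn G W u v) : ReachIn G W v u := by
  obtain ⟨p, hp⟩ := h
  exact ⟨p.reverse, fun x hx => hp x (by simpa using hx)⟩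

theorem ReachIn.trans (h₁ : ReachIn G W u v) (h₂ : ReachIn G W v w) : ReachIn G W u w := by
  obtain ⟨p, hp⟩ := h₁
  obtain ⟨q, hq⟩ := h₂
  refine ⟨p.append q, fun x hx => ?_⟩
  rcases Walk.mem_support_append_iff p q |>.1 hx with hx | hx
  exacts [hp x hx, hq x hx]

theorem ReachIn.mono (h : ReachIn G W u v) (hW : W ⊆ W') : ReachIn G W' u v :=
  h.elim fun p hp => ⟨p, fun x hx => hW (hp x hx)⟩

theorem ReachIn.of_mem_support (p : G.Walk u v) (hp : WalkIn W p) (hw : w ∈ p.support) :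
    ReachIn G W u w :=
  ⟨p.takeUntil w hw, fun x hx => hp x (p.support_takeUntil_subset_support hw hx)⟩

theorem ReachIn.of_forall_adj (hG : ∀ a b, G.Adj a b → a ∈ W → b ∈ W → ReachIn H W a b)
    (h : ReachIn G W u v) : ReachIn H W u v := by
  obtain ⟨p, hp⟩ := h
  induction p with
  | nil => exact .refl (hp _ (by simp))
  | cons hadj q ih =>
    simp only [WalkIn, Walk.support_cons, List.mem_cons, forall_eq_or_imp] at hp
    exact (hG _ _ hadj hp.1 (hp.2 _ q.start_mem_support)).trans (ih hp.2)

end Reach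

section Chordal

variable {V : Type} {G H : SimpleGraph V} {W U : Finset V}

theorem ChordalIn.mono (hG : ChordalIn G W) (hU : U ⊆ W) : ChordalIn G U :=
  fun v p hp hpU hlen => hG v p hp (fun x hx => hU (hpU x hx)) hlen

theorem ChordalIn.exists_chord_of_le (hG : ChordalIn G W) (hle : H ≤ G) {v : V}
    {p : H.Walk v v} (hp : p.IsCycle) (hW : WalkIn W p) (hlen : 4 ≤ p.length) :
    ∃ a b, a ∈ p.support ∧ b ∈ p.support ∧ G.Adj a b ∧ s(a, b) ∉ p.edges := by
  simpa using hG v (p.mapLe hle) (hp.mapLe hle) (by simpa [WalkIn] using hW) (by simpa using hlen)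

theorem inducedSG_le : inducedSG G W ≤ G :=
  fun _ _ h => h.1

theorem chordalIn_inducedSG_iff : ChordalIn (inducedSG G W) W ↔ ChordalIn G W := by
  refine ⟨fun hG v p hp hW hlen => ?_, fun hG v p hp hW hlen => ?_⟩
  · have hedges : ∀ e ∈ p.edges, e ∈ (inducedSG G W).edgeSet := by
      intro e he
      induction e with
      | _ x y =>
        exact ⟨p.adj_of_mem_edges he, hW x (p.fst_mem_support_of_mem_edges he),
          hW y (p.snd_mem_support_of_mem_edges he)⟩
    obtain ⟨a, b, ha, hb, hab, hne⟩ := hG v (p.transfer _ hedges) (hp.transfer hedges)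
      (by simpa [WalkIn] using hW) (by simpa using hlen)
    exact ⟨a, b, by simpa using ha, by simpa using hb, hab.1, by simpa using hne⟩
  · obtain ⟨a, b, ha, hb, hab, hne⟩ := hG.exists_chord_of_le inducedSG_le hp hW hlen
    exact ⟨a, b, ha, hb, ⟨hab, hW a ha, hW b hb⟩, hne⟩

theorem IsTriangulationIn.inducedSG (hG : IsTriangulationIn H W G) (hU : U ⊆ W) :
    IsTriangulationIn (inducedSG H U) U (inducedSG G U) :=
  ⟨fun _ _ h => h.2, fun a b h ha hb => ⟨hG.2.1 a b h.1 (hU ha) (hU hb), ha, hb⟩,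
    chordalIn_inducedSG_iff.2 (hG.2.2.mono hU)⟩

end Chordal

section Prime

variable {V : Type} {G : SimpleGraph V} {S U : Finset V} {a b : V}

theorem isPrimeIn_of_isClique (hS : G.IsClique (S : Set V)) : IsPrimeIn G S := by
  rintro ⟨S', -, -, u, v, -, hu, hv, huS', hvS', hsep⟩
  obtain ⟨p, hp⟩ : ∃ p : G.Walk u v, ∀ x ∈ p.support, x = u ∨ x = v := by
    by_cases huv : u = v
    · subst huv
      exact ⟨.nil, by simp⟩
    · exact ⟨(hS hu hv huv).toWalk, by simp⟩
  obtain ⟨s, hs, hsp⟩ := hsep p fun x hx => by rcases hp x hx with rfl | rfl <;> assumption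
  rcases hp s hsp with rfl | rfl <;> contradiction

theorem exists_isMpCompIn_superset [Fintype V] (hS : IsPrimeIn G S) :
    ∃ U, IsMpCompIn G Finset.univ U ∧ S ⊆ U := by
  obtain ⟨U, ⟨hSU, hU⟩, hmax⟩ := Set.Finite.exists_maximalFor Finset.card
    {U : Finset V | S ⊆ U ∧ IsPrimeIn G U} (Set.toFinite _) ⟨S, subset_rfl, hS⟩
  refine ⟨U, ⟨subset_univ U, hU, fun U' _ hU' hUU' => ?_⟩, hSU⟩
  exact eq_of_subset_of_card_le hUU' (hmax ⟨hSU.trans hUU', hU'⟩ (card_le_card hUU'))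

theorem IsPrimeIn.reachIn_sdiff [DecidableEq V] (hU : IsPrimeIn G U) (hS : G.IsClique (S : Set V))
    (h : ReachIn G U a b) (ha : a ∉ S) (hb : b ∉ S) : ReachIn G (U \ S) a b := by
  by_contra hsep
  refine hU ⟨S ∩ U, inter_subset_right, hS.subset (by simp), a, b, h, h.left_mem, h.right_mem,
    by simp [ha], by simp [hb], fun p hp => ?_⟩
  by_contra! hp'
  exact hsep ⟨p, fun x hx =>
    mem_sdiff.2 ⟨hp x hx, fun hxS => hp' x (mem_inter.2 ⟨hxS, hp x hx⟩) hx⟩⟩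

end Prime

theorem IsMinTriIn.reachIn_of_adj {V : Type} {H G : SimpleGraph V} {W : Finset V} {a b : V}
    (hG : IsMinTriIn H W G) (hab : G.Adj a b) : ReachIn H W a b := by
  let G' : SimpleGraph V :=
    { Adj x y := G.Adj x y ∧ ReachIn H W x y
      symm := ⟨fun _ _ h => ⟨h.1.symm, h.2.symm⟩⟩
      loopless := ⟨fun x h => G.loopless.irrefl x h.1⟩ }
  have hG'le : G' ≤ G := fun _ _ h => h.1
  have hG'reach : ∀ x y, G'.Adj x y → x ∈ W → y ∈ W → ReachIn H W x y := fun _ _ h _ _ => h.2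
  have htri : IsTriangulationIn H W G' := by
    refine ⟨fun x y h => hG.1.1 x y h.1,
      fun x y h hx hy => ⟨hG.1.2.1 x y h hx hy, .of_adj h hx hy⟩, fun v p hp hW hlen => ?_⟩
    obtain ⟨x, y, hx, hy, hxy, hne⟩ := hG.1.2.2.exists_chord_of_le hG'le hp hW hlen
    have hvx := (ReachIn.of_mem_support p hW hx).of_forall_adj hG'reach
    have hvy := (ReachIn.of_mem_support p hW hy).of_forall_adj hG'reach
    exact ⟨x, y, hx, hy, ⟨hxy, hvx.symm.trans hvy⟩, hne⟩
  have hGG' : G ≤ G' := (hG'le.lt_or_eq.resolve_left (hG.2 G' htri)).ge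
  exact (hGG' hab).2

theorem reachIn_compl_of_forall_adj_reachIn_prime {V : Type} [Fintype V] [DecidableEq V]
    {G H : SimpleGraph V} {S : Finset V} {u v : V}
    (hG : ∀ a b, G.Adj a b → ∃ U, IsPrimeIn H U ∧ ReachIn H U a b)
    (hS : H.IsClique (S : Set V)) (h : ReachIn G Sᶜ u v) : ReachIn H Sᶜ u v :=
  h.of_forall_adj fun a b hab ha hb => by
    obtain ⟨U, hU, hr⟩ := hG a b hab
    exact (hU.reachIn_sdiff hS hr (mem_compl.1 ha) (mem_compl.1 hb)).mono
      fun x hx => mem_compl.2 (mem_sdiff.1 hx).2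

theorem SimpleGraph.Walk.IsCycle.exists_nonconsecutive_mem_separator {V : Type} [Fintype V]
    [DecidableEq V] {G : SimpleGraph V} {S : Finset V} {v t₁ t₂ : V} {c : G.Walk v v}
    (hc : c.IsCycle) (ht₁ : t₁ ∈ c.support) (ht₂ : t₂ ∈ c.support) (ht₁S : t₁ ∉ S)
    (ht₂S : t₂ ∉ S) (hsep : ¬ ReachIn G Sᶜ t₁ t₂) :
    ∃ s₁ ∈ S, ∃ s₂ ∈ S, s₁ ∈ c.support ∧ s₂ ∈ c.support ∧ s₁ ≠ s₂ ∧ s(s₁, s₂) ∉ c.edges := by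
  have hc' : (c.rotate t₁ ht₁).IsCycle := hc.rotate ht₁
  have ht₂' : t₂ ∈ (c.rotate t₁ ht₁).support := (c.mem_support_rotate_iff t₁ ht₁).2 ht₂
  set q₁ := (c.rotate t₁ ht₁).takeUntil t₂ ht₂'
  set q₂ := (c.rotate t₁ ht₁).dropUntil t₂ ht₂'
  have hsplit : q₁.append q₂ = c.rotate t₁ ht₁ := Walk.take_spec _ ht₂'
  have hdisj : q₁.support.tail.Disjoint q₂.support.tail := by
    have := hc'.support_nodup
    rw [← hsplit, Walk.tail_support_append] at this
    exact List.disjoint_of_nodup_append this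
  have hmeet : ∀ {x y : V} (q : G.Walk x y), x ∉ S → ¬ ReachIn G Sᶜ x y →
      ∃ s ∈ S, s ∈ q.support.tail := by
    intro x y q hx hxy
    by_contra! hq
    refine hxy ⟨q, fun z hz => mem_compl.2 fun hzS => ?_⟩
    rcases (q.mem_support_iff).1 hz with rfl | hz
    exacts [hx hzS, hq z hzS hz]
  have mem_tail : ∀ {x y : V} (q : G.Walk x y) {s}, s ∈ S → s ∈ q.support → x ∉ S →
      s ∈ q.support.tail := fun q s hs hsq hx =>
    ((q.mem_support_iff).1 hsq).resolve_left fun h => hx (h ▸ hs)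
  have mem_c : ∀ {s}, s ∈ (c.rotate t₁ ht₁).support → s ∈ c.support :=
    (c.mem_support_rotate_iff t₁ ht₁).1
  obtain ⟨s₁, hs₁S, hs₁⟩ := hmeet q₁ ht₁S hsep
  obtain ⟨s₂, hs₂S, hs₂⟩ := hmeet q₂ ht₂S fun h => hsep h.symm
  refine ⟨s₁, hs₁S, s₂, hs₂S,
    mem_c (Walk.support_takeUntil_subset_support _ _ (List.mem_of_mem_tail hs₁)),
    mem_c (Walk.support_dropUntil_subset_support _ _ (List.mem_of_mem_tail hs₂)),
    fun h => hdisj hs₁ (h ▸ hs₂), fun he => ?_⟩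
  rw [← (c.rotate_edges t₁ ht₁).mem_iff, ← hsplit, Walk.edges_append, List.mem_append] at he
  rcases he with he | he
  · exact hdisj (mem_tail q₁ hs₂S (q₁.snd_mem_support_of_mem_edges he) ht₁S) hs₂
  · exact hdisj hs₁ (mem_tail q₂ hs₁S (q₂.fst_mem_support_of_mem_edges he) ht₂S)

section ReachFaithful

variable {V : Type} [DecidableEq V] {H : SimpleGraph V} {P P' S T : Finset V}

def ReachFaithful (H : SimpleGraph V) (P : Finset V) : Prop :=
  ∀ X : Finset V, ∀ u ∈ P, ∀ v ∈ P, ReachIn H X u v → ReachIn H (P ∩ X) u v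

theorem reachFaithful_univ [Fintype V] : ReachFaithful H Finset.univ := by
  simp [ReachFaithful]

/-- A walk inside `P` can only leave `P'` from `S` and re-enter it through `S`, so each such
excursion can be replaced by an edge of the clique `S`. -/
theorem exists_walkIn_of_boundary_subset_clique (hS : H.IsClique (S : Set V))
    (hbd : ∀ x y, x ∈ P' → y ∈ P → y ∉ P' → H.Adj x y → x ∈ S) {a b : V} (w : H.Walk a b)
    (hw : WalkIn P w) (hb : b ∈ P') :
    (a ∈ P' → ∃ w' : H.Walk a b, WalkIn P' w' ∧ w'.support ⊆ w.support) ∧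
      (a ∉ P' → ∃ d ∈ S, ∃ w' : H.Walk d b, WalkIn P' w' ∧ w'.support ⊆ w.support) := by
  induction w with
  | nil => exact ⟨fun ha => ⟨.nil, by simpa [WalkIn] using ha, by simp⟩, fun ha => absurd hb ha⟩
  | @cons a c b hac q ih =>
    simp only [WalkIn, Walk.support_cons, List.mem_cons, forall_eq_or_imp] at hw
    have hcP : c ∈ P := hw.2 c q.start_mem_support
    obtain ⟨ihc, ihnc⟩ := ih hw.2 hb
    have hsub : q.support ⊆ (Walk.cons hac q).support := by simp
    refine ⟨fun ha => ?_, fun ha => ?_⟩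
    · by_cases hc : c ∈ P'
      · obtain ⟨w', hw', hsup⟩ := ihc hc
        refine ⟨.cons hac w', by simpa [WalkIn] using ⟨ha, hw'⟩, ?_⟩
        simpa using List.Subset.trans hsup hsub
      obtain ⟨d, hdS, w', hw', hsup⟩ := ihnc hc
      by_cases had : a = d
      · subst had
        exact ⟨w', hw', List.Subset.trans hsup hsub⟩
      · refine ⟨.cons (hS (hbd a c ha hcP hc hac) hdS had) w', ?_, ?_⟩
        · simpa [WalkIn] using ⟨ha, hw'⟩
        · simpa using List.Subset.trans hsup hsub
    · by_cases hc : c ∈ P'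
      · obtain ⟨w', hw', hsup⟩ := ihc hc
        exact ⟨c, hbd c a hc hw.1 ha hac.symm, w', hw', List.Subset.trans hsup hsub⟩
      · obtain ⟨d, hdS, w', hw', hsup⟩ := ihnc hc
        exact ⟨d, hdS, w', hw', List.Subset.trans hsup hsub⟩

theorem ReachFaithful.of_boundary_subset_clique (hP : ReachFaithful H P) (hP'P : P' ⊆ P)
    (hS : H.IsClique (S : Set V)) (hbd : ∀ x y, x ∈ P' → y ∈ P → y ∉ P' → H.Adj x y → x ∈ S) :
    ReachFaithful H P' := by
  intro X u hu v hv h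
  obtain ⟨w, hw⟩ := hP X u (hP'P hu) v (hP'P hv) h
  obtain ⟨w', hw', hsub⟩ := (exists_walkIn_of_boundary_subset_clique hS hbd w
    (fun x hx => (mem_inter.1 (hw x hx)).1) hv).1 hu
  exact ⟨w', fun x hx => mem_inter.2 ⟨hw' x hx, (mem_inter.1 (hw x (hsub hx))).2⟩⟩

theorem ReachFaithful.exists_ssubset_of_isCliqueSepIn (hP : ReachFaithful H P)
    (hS : IsCliqueSepIn H P S) (t : V) :
    ∃ P' ⊂ P, ReachFaithful H P' ∧ S ⊆ P' ∧ ∀ x, ReachIn H (P \ S) t x → x ∈ P' := by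
  obtain ⟨hSP, hScl, u, v, -, hu, hv, huS, hvS, hsep⟩ := hS
  set P' := P.filter fun x => x ∈ S ∨ ReachIn H (P \ S) t x
  have hmem : ∀ x, ReachIn H (P \ S) t x → x ∈ P' := fun x hx =>
    mem_filter.2 ⟨(mem_sdiff.1 hx.right_mem).1, .inr hx⟩
  have hbd : ∀ x y, x ∈ P' → y ∈ P → y ∉ P' → H.Adj x y → x ∈ S := by
    intro x y hx hy hyP' hxy
    by_contra hxS
    have htx := ((mem_filter.1 hx).2).resolve_left hxS
    have hyS : y ∉ S := fun hyS => hyP' (mem_filter.2 ⟨hy, .inl hyS⟩)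
    exact hyP' (hmem y (htx.trans (.of_adj hxy htx.right_mem (mem_sdiff.2 ⟨hy, hyS⟩))))
  have hPP' : ¬ P ⊆ P' := by
    intro hPP'
    have htu := ((mem_filter.1 (hPP' hu)).2).resolve_left huS
    have htv := ((mem_filter.1 (hPP' hv)).2).resolve_left hvS
    obtain ⟨p, hp⟩ := htu.symm.trans htv
    obtain ⟨s, hs, hsp⟩ := hsep p fun x hx => (mem_sdiff.1 (hp x hx)).1
    exact (mem_sdiff.1 (hp s hsp)).2 hs
  exact ⟨P', ssubset_of_subset_not_subset (filter_subset _ _) hPP',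
    hP.of_boundary_subset_clique (filter_subset _ _) hScl hbd,
    fun x hx => mem_filter.2 ⟨hSP hx, .inl hx⟩, hmem⟩

end ReachFaithful

section CliqueInseparable

variable {V : Type} [Fintype V] [DecidableEq V] {G H : SimpleGraph V} {T : Finset V}

def CliqueInseparable (H : SimpleGraph V) (T : Finset V) : Prop :=
  ∀ S : Finset V, H.IsClique (S : Set V) →
    ∀ t₁ ∈ T, ∀ t₂ ∈ T, t₁ ∉ S → t₂ ∉ S → ReachIn H Sᶜ t₁ t₂

/-- A smallest reach-faithful superset `P` of `T` is prime: otherwise cutting `P` along a clique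
separator, keeping the component of a vertex of `T`, would give a smaller one. -/
theorem CliqueInseparable.exists_isPrimeIn_superset (hT : CliqueInseparable H T) :
    ∃ Q, T ⊆ Q ∧ IsPrimeIn H Q := by
  obtain ⟨P, ⟨hTP, hP⟩, hmin⟩ := Set.Finite.exists_minimalFor Finset.card
    {P : Finset V | T ⊆ P ∧ ReachFaithful H P} (Set.toFinite _)
    ⟨Finset.univ, subset_univ T, reachFaithful_univ⟩
  by_cases hprime : IsPrimeIn H P
  · exact ⟨P, hTP, hprime⟩
  obtain ⟨S, hS⟩ := not_not.1 hprime
  by_cases hTS : T ⊆ S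
  · exact ⟨S, hTS, isPrimeIn_of_isClique hS.2.1⟩
  obtain ⟨t, htT, htS⟩ := not_subset.1 hTS
  obtain ⟨P', hP'P, hP', hSP', hreach⟩ := hP.exists_ssubset_of_isCliqueSepIn hS t
  have hTP' : T ⊆ P' := fun x hx => by
    by_cases hxS : x ∈ S
    · exact hSP' hxS
    refine hreach x ((hP _ t (hTP htT) x (hTP hx) (hT S hS.2.1 t htT x hx htS hxS)).mono ?_)
    exact fun y hy => mem_sdiff.2 ⟨(mem_inter.1 hy).1, mem_compl.1 (mem_inter.1 hy).2⟩
  exact absurd (hmin ⟨hTP', hP'⟩ (card_le_card hP'P.subset)) (card_lt_card hP'P).not_ge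

theorem chordalIn_univ_of_chordalIn_isMpCompIn (hle : H ≤ G)
    (hG : ∀ a b, G.Adj a b → ∃ U, IsPrimeIn H U ∧ ReachIn H U a b)
    (hmp : ∀ U, IsMpCompIn H Finset.univ U → ChordalIn G U) : ChordalIn G Finset.univ := by
  intro v p hp _ hlen
  by_cases hT : CliqueInseparable H p.support.toFinset
  · obtain ⟨Q, hTQ, hQ⟩ := hT.exists_isPrimeIn_superset
    obtain ⟨U, hU, hQU⟩ := exists_isMpCompIn_superset hQ
    exact hmp U hU v p hp (fun x hx => hQU (hTQ (List.mem_toFinset.2 hx))) hlen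
  simp only [CliqueInseparable, List.mem_toFinset, not_forall] at hT
  obtain ⟨S, hS, t₁, ht₁, t₂, ht₂, ht₁S, ht₂S, hsep⟩ := hT
  obtain ⟨s₁, hs₁, s₂, hs₂, hs₁p, hs₂p, hne, hedge⟩ :=
    hp.exists_nonconsecutive_mem_separator ht₁ ht₂ ht₁S ht₂S
      fun h => hsep (reachIn_compl_of_forall_adj_reachIn_prime hG hS h)
  exact ⟨s₁, s₂, hs₁p, hs₂p, hle (hS hs₁ hs₂ hne), hedge⟩

end CliqueInseparable

/-- If `H ≤ H'`, every new edge of `H'` joins two vertices of a common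
mp-component of `H`, and on each mp-component `V` of `H` the induced subgraph `H'_V`
is a minimal triangulation of `H_V`, then `H'` is a minimal triangulation of `H`. -/
theorem minimal_triangulation_of_mp_triangulations
    {V : Type} [Fintype V] [DecidableEq V] (H H' : SimpleGraph V)
    (hle : H ≤ H')
    (hnew : ∀ a b, H'.Adj a b → ¬ H.Adj a b →
      ∃ U : Finset V, IsMpCompIn H Finset.univ U ∧ a ∈ U ∧ b ∈ U)
    (hmp : ∀ U : Finset V, IsMpCompIn H Finset.univ U →
      IsMinTriIn (inducedSG H U) U (inducedSG H' U)) :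
    IsMinTriIn H Finset.univ H' := by
  have hreach : ∀ a b, H'.Adj a b → ∃ U, IsPrimeIn H U ∧ ReachIn H U a b := by
    intro a b hab
    by_cases hH : H.Adj a b
    · exact ⟨{a, b}, isPrimeIn_of_isClique (by simpa using fun _ => hH),
        .of_adj hH (by simp) (by simp)⟩
    obtain ⟨U, hU, haU, hbU⟩ := hnew a b hab hH
    refine ⟨U, hU.2.1, ((hmp U hU).reachIn_of_adj ⟨hab, haU, hbU⟩).of_forall_adj ?_⟩
    exact fun x y hxy hx hy => .of_adj hxy.1 hx hy
  have hchordal : ChordalIn H' Finset.univ := chordalIn_univ_of_chordalIn_isMpCompIn hle hreach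
    fun U hU => chordalIn_inducedSG_iff.1 (hmp U hU).1.2.2
  refine ⟨⟨fun a b _ => ⟨mem_univ a, mem_univ b⟩, fun a b hab _ _ => hle hab, hchordal⟩,
    fun G hG hlt => ?_⟩
  obtain ⟨a, b, hab, hnab⟩ : ∃ a b, H'.Adj a b ∧ ¬ G.Adj a b := by
    by_contra! h
    exact hlt.not_ge fun a b => h a b
  obtain ⟨U, hU, haU, hbU⟩ := hnew a b hab fun h => hnab (hG.2.1 a b h (mem_univ a) (mem_univ b))
  refine (hmp U hU).2 _ (hG.inducedSG (subset_univ U)) (lt_of_le_not_ge ?_ ?_)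
  · exact fun x y h => ⟨hlt.le h.1, h.2⟩
  · exact fun h => hnab (h ⟨hab, haU, hbU⟩).1
end

section
/- For every chain graph H on a finite vertex set N and every pairwise disjoint triplet (A,B,C) of subsets of N belonging to M_H, there exists a minimal triangulation H' of H such that (A,B,C) belongs to M_{H'}. -/
open scoped Classical BigOperators

variable {V : Type} [Fintype V] [DecidableEq V]

/-!
Let `T = an(A ∪ B ∪ C)`. The vertices of `T \ C` split into those joined to `A` outside `C` in
`(H_T)^mor` (`IsLeft`) and the others; vertices on different sides are `Opposed`. As `C` separates
`A` from `B`, no vertex of `B` is on the side of `A`, and no moral edge of `H_T` joins two opposed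
vertices.

`sepFill H A B C` adds to `H` every non-opposed edge inside a chain component and every
non-opposed arrow from a parent of a component into it. Orienting it by `sepKey` (ancestors first,
then `C` first within each component) gives an equivalent DAG: each parent of a component points to
the minimum of the component, and a detour of a moral path outside the ancestral set of the DAG
stays inside one component and on one side, so it can be short-cut by a moral edge of the DAG.
Hence `sepFill H A B C` is a triangulation of `H`. A chain graph between `H` and `sepFill H A B C`
still has no moral edge between opposed vertices, so it still separates `A` from `B` by `C`, and an
edge-minimal triangulation below `sepFill H A B C` is a minimal triangulation.
-/

open Relation Finset

section MixedGraphs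

omit [Fintype V] [DecidableEq V]

variable {G : MixedGraph V} {W : Finset V} {a b u v x y : V}

lemma MixedGraph.UndirEdge.reachable (h : G.UndirEdge u v) : G.ugPart.Reachable u v :=
  SimpleGraph.Adj.reachable h

lemma reflTransGen_of_reachable (h : G.ugPart.Reachable u v) : ReflTransGen G.Adj u v :=
  ReflTransGen.mono (fun _ _ (hab : G.ugPart.Adj _ _) => hab.1) _ _
    ((SimpleGraph.reachable_iff_reflTransGen u v).1 h)

lemma IsChainGraph.not_reachable (hG : IsChainGraph G) (h : G.DirEdge a b) :
    ¬ G.ugPart.Reachable a b :=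
  fun hr => hG a b h (reflTransGen_of_reachable hr.symm)

lemma IsChainGraph.reachable_of_reflTransGen (hG : IsChainGraph G) (h : ReflTransGen G.Adj u v)
    (h' : ReflTransGen G.Adj v u) : G.ugPart.Reachable u v := by
  induction h using ReflTransGen.head_induction_on with
  | refl => rfl
  | @head a c hac hcv ih =>
    have hac' : G.ugPart.Reachable a c := by
      by_cases hca : G.Adj c a
      · exact MixedGraph.UndirEdge.reachable ⟨hac, hca⟩
      · exact absurd (hcv.trans h') (hG a c ⟨hac, hca⟩)
    exact hac'.trans (ih (h'.tail hac))

lemma inducedM_dirEdge_iff : (inducedM G W).DirEdge x y ↔ G.DirEdge x y ∧ x ∈ W ∧ y ∈ W := by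
  simp only [MixedGraph.DirEdge, inducedM]
  tauto

lemma reachable_of_reachable_inducedM (h : (inducedM G W).ugPart.Reachable x y) :
    G.ugPart.Reachable x y :=
  h.mono fun _ _ (hab : (inducedM G W).ugPart.Adj _ _) => ⟨hab.1.1, hab.2.1⟩

lemma IsChainGraph.induced (hG : IsChainGraph G) : IsChainGraph (inducedM G W) :=
  fun a b h hba => hG a b (inducedM_dirEdge_iff.1 h).1
    (ReflTransGen.mono (fun _ _ (hcd : (inducedM G W).Adj _ _) => hcd.1) _ _ hba)

def MixedGraph.orient {α : Type*} [Preorder α] (G : MixedGraph V) (f : V → α) :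
    MixedGraph V where
  Adj x y := G.Adj x y ∧ f x < f y
  irrefl _ h := lt_irrefl _ h.2

lemma MixedGraph.le_of_reflTransGen_orient {α : Type*} [Preorder α] {f : V → α}
    (h : ReflTransGen (G.orient f).Adj x y) : f x ≤ f y := by
  induction h with
  | refl => exact le_rfl
  | tail _ hcd ih => exact ih.trans hcd.2.le

lemma MixedGraph.isDAG_orient {α : Type*} [Preorder α] (f : V → α) : IsDAG (G.orient f) :=
  ⟨fun _ _ hab hba => lt_asymm hab.2 hba.2,
    fun _ _ hab hba => (MixedGraph.le_of_reflTransGen_orient hba).not_gt hab.1.2⟩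

lemma MixedGraph.eq_of_reachable_orient {α : Type*} [Preorder α] {f : V → α}
    (h : (G.orient f).ugPart.Reachable x y) : x = y := by
  rcases ((SimpleGraph.reachable_iff_reflTransGen x y).1 h).cases_head with h | ⟨c, hc, -⟩
  · exact h
  · exact absurd hc.1.2 hc.2.2.not_gt

end MixedGraphs

section Ancestors

omit [DecidableEq V]

variable {G : MixedGraph V} {S : Finset V} {a b u v x y : V}

@[simp] lemma mem_anSet : a ∈ anSet G S ↔ ∃ k ∈ S, ReflTransGen G.Adj a k := by
  simp [anSet]

lemma mem_anSet_of_reflTransGen (h : ReflTransGen G.Adj a b) (hb : b ∈ anSet G S) :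
    a ∈ anSet G S := by
  obtain ⟨k, hk, hbk⟩ := mem_anSet.1 hb
  exact mem_anSet.2 ⟨k, hk, h.trans hbk⟩

lemma mem_anSet_of_adj (h : G.Adj a b) (hb : b ∈ anSet G S) : a ∈ anSet G S :=
  mem_anSet_of_reflTransGen (.single h) hb

lemma mem_anSet_of_mem (h : a ∈ S) : a ∈ anSet G S :=
  mem_anSet.2 ⟨a, h, .refl⟩

lemma anSet_subset_anSet {G' : MixedGraph V} (h : ∀ a b, G.Adj a b → ReflTransGen G'.Adj a b) :
    anSet G S ⊆ anSet G' S := fun v hv => by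
  obtain ⟨k, hk, hvk⟩ := mem_anSet.1 hv
  exact mem_anSet.2 ⟨k, hk, ReflTransGen.lift' id h _ _ hvk⟩

lemma mem_anSet_of_reachable (h : G.ugPart.Reachable a b) (hb : b ∈ anSet G S) :
    a ∈ anSet G S :=
  mem_anSet_of_reflTransGen (reflTransGen_of_reachable h) hb

noncomputable def height (G : MixedGraph V) (v : V) : ℕ :=
  #{u | ReflTransGen G.Adj u v ∧ ¬ ReflTransGen G.Adj v u}

lemma height_lt (h : ReflTransGen G.Adj u v) (h' : ¬ ReflTransGen G.Adj v u) :
    height G u < height G v := by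
  refine Finset.card_lt_card ⟨fun w hw => ?_, fun hsub => ?_⟩
  · simp only [Finset.mem_filter, Finset.mem_univ, true_and] at hw ⊢
    exact ⟨hw.1.trans h, fun hvw => hw.2 (h.trans hvw)⟩
  · exact (Finset.mem_filter.1 (hsub (Finset.mem_filter.2 ⟨Finset.mem_univ u, h, h'⟩))).2.2 .refl

lemma height_eq (h : ReflTransGen G.Adj u v) (h' : ReflTransGen G.Adj v u) :
    height G u = height G v := by
  unfold height
  congr 1
  ext w
  simp only [Finset.mem_filter, Finset.mem_univ, true_and]
  exact ⟨fun hw => ⟨hw.1.trans h, fun hvw => hw.2 (h.trans hvw)⟩,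
    fun hw => ⟨hw.1.trans h', fun huw => hw.2 (h'.trans huw)⟩⟩

lemma reachable_inducedM_anSet (hx : x ∈ anSet G S) (h : G.ugPart.Reachable x y) :
    (inducedM G (anSet G S)).ugPart.Reachable x y := by
  rw [SimpleGraph.reachable_iff_reflTransGen] at h
  suffices ∀ z, ReflTransGen G.ugPart.Adj x z →
      z ∈ anSet G S ∧ (inducedM G (anSet G S)).ugPart.Reachable x z from (this y h).2
  intro z hz
  induction hz with
  | refl => exact ⟨hx, .rfl⟩
  | tail _ hbc ih =>
    have hc := mem_anSet_of_adj hbc.2 ih.1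
    exact ⟨hc, ih.2.trans (SimpleGraph.Adj.reachable ⟨⟨hbc.1, ih.1, hc⟩, hbc.2, hc, ih.1⟩)⟩

end Ancestors

section ChainComponents

variable {G : MixedGraph V} {S K W : Finset V} {a b u v x y : V}

@[simp] lemma mem_chainComp : u ∈ chainComp G v ↔ G.ugPart.Reachable v u := by
  simp [chainComp]

@[simp] lemma mem_paSet : a ∈ paSet G K ↔ a ∉ K ∧ ∃ b ∈ K, G.DirEdge a b := by
  simp [paSet]

lemma chainComp_eq_of_reachable (h : G.ugPart.Reachable u v) : chainComp G u = chainComp G v := by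
  ext w
  simp only [mem_chainComp]
  exact ⟨h.symm.trans, h.trans⟩

lemma reflTransGen_of_mem_paSet (h : x ∈ paSet G (chainComp G y)) : ReflTransGen G.Adj x y := by
  obtain ⟨-, b, hb, hxb⟩ := mem_paSet.1 h
  exact ReflTransGen.head hxb.1 (reflTransGen_of_reachable (mem_chainComp.1 hb).symm)

lemma IsChainGraph.not_reflTransGen_of_mem_paSet (hG : IsChainGraph G)
    (h : x ∈ paSet G (chainComp G y)) : ¬ ReflTransGen G.Adj y x := fun hyx =>
  (mem_paSet.1 h).1 (mem_chainComp.2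
    (hG.reachable_of_reflTransGen (reflTransGen_of_mem_paSet h) hyx).symm)

lemma moralG_adj_of_adj (h : G.Adj x y) : (moralG G).Adj x y :=
  ⟨fun hxy => G.irrefl x (hxy ▸ h), .inl h⟩

lemma moralG_adj_iff (hG : IsChainGraph G) : (moralG G).Adj x y ↔ x ≠ y ∧
    (G.Adj x y ∨ G.Adj y x ∨
      ∃ k₁ k₂, G.DirEdge x k₁ ∧ G.DirEdge y k₂ ∧ G.ugPart.Reachable k₁ k₂) := by
  refine ⟨fun ⟨hne, h⟩ => ⟨hne, ?_⟩, fun ⟨hne, h⟩ => ⟨hne, ?_⟩⟩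
  · rcases h with h | h | ⟨K, hK, hx, hy⟩
    · exact .inl h
    · exact .inr (.inl h)
    · obtain ⟨w, -, rfl⟩ := Finset.mem_image.1 hK
      obtain ⟨-, k₁, hk₁, hxk₁⟩ := mem_paSet.1 hx
      obtain ⟨-, k₂, hk₂, hyk₂⟩ := mem_paSet.1 hy
      exact .inr (.inr ⟨k₁, k₂, hxk₁, hyk₂, (mem_chainComp.1 hk₁).symm.trans (mem_chainComp.1 hk₂)⟩)
  · rcases h with h | h | ⟨k₁, k₂, hxk₁, hyk₂, hk⟩
    · exact .inl h
    · exact .inr (.inl h)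
    · refine .inr (.inr ⟨chainComp G k₁, Finset.mem_image_of_mem _ (Finset.mem_univ _), ?_, ?_⟩)
      · exact mem_paSet.2 ⟨fun hr => hG.not_reachable hxk₁ (mem_chainComp.1 hr).symm,
          k₁, mem_chainComp.2 .rfl, hxk₁⟩
      · exact mem_paSet.2 ⟨fun hr => hG.not_reachable hyk₂ ((mem_chainComp.1 hr).symm.trans hk),
          k₂, mem_chainComp.2 hk, hyk₂⟩

lemma mem_of_moralG_inducedM_adj (h : (moralG (inducedM G W)).Adj x y) : x ∈ W ∧ y ∈ W := by
  rcases h.2 with h | h | ⟨K, -, hx, hy⟩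
  · exact ⟨h.2.1, h.2.2⟩
  · exact ⟨h.2.2, h.2.1⟩
  · obtain ⟨-, _, -, hxb⟩ := mem_paSet.1 hx
    obtain ⟨-, _, -, hyb⟩ := mem_paSet.1 hy
    exact ⟨hxb.1.2.1, hyb.1.2.1⟩

/-- `(G_{an(S)})^mor`. -/
noncomputable abbrev ancMoral (G : MixedGraph V) (S : Finset V) : SimpleGraph V :=
  moralG (inducedM G (anSet G S))

lemma ancMoral_adj_of_adj (h : G.Adj x y) (hx : x ∈ anSet G S) (hy : y ∈ anSet G S) :
    (ancMoral G S).Adj x y :=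
  moralG_adj_of_adj ⟨h, hx, hy⟩

end ChainComponents

theorem SimpleGraph.Walk.exists_support_subset_of_bypass {α : Type*} {G G' : SimpleGraph α}
    {P : Set α} (hin : ∀ ⦃u z⦄, u ∈ P → z ∈ P → G.Adj u z → G'.Adj u z)
    (hout : ∀ ⦃u z x y⦄, u ∈ P → z ∈ P → x ∉ P → y ∉ P → G.Adj u x → G.Adj y z →
      ReflTransGen (fun a b => G.Adj a b ∧ a ∉ P ∧ b ∉ P) x y → u = z ∨ G'.Adj u z)
    {a b : α} (w : G.Walk a b) (ha : a ∈ P) (hb : b ∈ P) :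
    ∃ w' : G'.Walk a b, w'.support ⊆ w.support := by
  -- `u` is the last vertex of `P` visited; the walk has since left `P` through `x₀`.
  suffices key : ∀ {x : α} (w : G.Walk x b) (u : α), u ∈ P →
      (x = u ∨ x ∉ P ∧ ∃ x₀ ∉ P, G.Adj u x₀ ∧
        ReflTransGen (fun a b => G.Adj a b ∧ a ∉ P ∧ b ∉ P) x₀ x) →
      ∃ w' : G'.Walk u b, w'.support ⊆ u :: w.support by
    obtain ⟨w', hw'⟩ := key w a ha (.inl rfl)
    refine ⟨w', fun t ht => ?_⟩
    rcases List.mem_cons.1 (hw' ht) with rfl | ht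
    exacts [w.start_mem_support, ht]
  intro x p
  clear ha w
  induction p with
  | nil =>
    rintro u - (rfl | ⟨hx, -⟩)
    · exact ⟨.nil, by simp⟩
    · exact absurd hb hx
  | @cons x y _ hxy p ih =>
    rintro u hu hx
    by_cases hy : y ∈ P
    · obtain ⟨w', hw'⟩ := ih hb y hy (.inl rfl)
      have huy : u = y ∨ G'.Adj u y := by
        rcases hx with rfl | ⟨hx, x₀, hx₀, hux₀, hx₀x⟩
        · exact .inr (hin hu hy hxy)
        · exact hout hu hy hx₀ hx hux₀ hxy hx₀x
      rcases huy with rfl | huy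
      · exact ⟨w', List.Subset.trans hw' (by simp)⟩
      · exact ⟨.cons huy w', by simpa using List.Subset.trans hw' (by simp)⟩
    · have hx₀ : ∃ x₀ ∉ P, G.Adj u x₀ ∧
          ReflTransGen (fun a b => G.Adj a b ∧ a ∉ P ∧ b ∉ P) x₀ y := by
        rcases hx with rfl | ⟨hx, x₀, hx₀, hux₀, hx₀x⟩
        · exact ⟨y, hy, hxy, .refl⟩
        · exact ⟨x₀, hx₀, hux₀, hx₀x.tail ⟨hxy, hx, hy⟩⟩
      obtain ⟨w', hw'⟩ := ih hb u hu (.inr ⟨hy, hx₀⟩)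
      exact ⟨w', List.Subset.trans hw' (by simp)⟩

section Separation

omit [DecidableEq V]

variable {G G' : SimpleGraph V} {A B C : Finset V}

lemma SeparatesIn.of_walks (h : SeparatesIn G Finset.univ A B C)
    (hw : ∀ a ∈ A, ∀ b ∈ B, ∀ w : G'.Walk a b, ∃ w' : G.Walk a b, w'.support ⊆ w.support) :
    SeparatesIn G' Finset.univ A B C := by
  intro a ha b hb w _
  obtain ⟨w', hw'⟩ := hw a ha b hb w
  obtain ⟨c, hc, hcw⟩ := h a ha b hb w' fun _ _ => Finset.mem_univ _
  exact ⟨c, hc, hw' hcw⟩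

lemma separatesIn_univ_of_closed (P : V → Prop) (hA : ∀ a ∈ A, a ∉ C → P a)
    (hstep : ∀ x y, G.Adj x y → P x → y ∉ C → P y) (hB : ∀ b ∈ B, ¬ P b) :
    SeparatesIn G Finset.univ A B C := by
  have hwalk : ∀ {x y} (p : G.Walk x y), P x → (∀ c ∈ p.support, c ∉ C) → P y := by
    intro x y p
    induction p with
    | nil => exact fun hx _ => hx
    | cons hxy p ih =>
      intro hx hp
      exact ih (hstep _ _ hxy hx (hp _ (by simp))) fun c hc => hp c (by simp [hc])
  intro a ha b hb w _
  by_contra! hw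
  exact hB b hb (hwalk w (hA a ha fun haC => hw a haC w.start_mem_support)
    fun c hc hcC => hw c hcC hc)

end Separation

section Sides

variable (H : MixedGraph V) (A B C : Finset V)

def IsLeft (v : V) : Prop :=
  ∃ a ∈ A, ∃ p : (ancMoral H (A ∪ B ∪ C)).Walk a v, ∀ x ∈ p.support, x ∉ C

def Opposed (x y : V) : Prop :=
  x ∈ anSet H (A ∪ B ∪ C) \ C ∧ y ∈ anSet H (A ∪ B ∪ C) \ C ∧
    ¬ (IsLeft H A B C x ↔ IsLeft H A B C y)

variable {H A B C} {a b k u v w x y : V}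

lemma IsLeft.of_mem (ha : a ∈ A) (haC : a ∉ C) : IsLeft H A B C a :=
  ⟨a, ha, .nil, by simpa⟩

lemma IsLeft.step (hx : IsLeft H A B C x) (hxy : (ancMoral H (A ∪ B ∪ C)).Adj x y) (hy : y ∉ C) :
    IsLeft H A B C y := by
  obtain ⟨a, ha, p, hp⟩ := hx
  refine ⟨a, ha, p.concat hxy, fun z hz => ?_⟩
  rw [SimpleGraph.Walk.support_concat, List.mem_append, List.mem_singleton] at hz
  rcases hz with hz | rfl
  exacts [hp z hz, hy]

lemma IsLeft.mem (hx : IsLeft H A B C x) : x ∈ anSet H (A ∪ B ∪ C) \ C := by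
  obtain ⟨a, ha, p, hp⟩ := hx
  have hstart : ∀ {y} (q : (ancMoral H (A ∪ B ∪ C)).Walk x y),
      y ∈ anSet H (A ∪ B ∪ C) → x ∈ anSet H (A ∪ B ∪ C) := by
    intro y q hy
    cases q with
    | nil => exact hy
    | cons h _ => exact (mem_of_moralG_inducedM_adj h).1
  exact mem_sdiff.2 ⟨hstart p.reverse (mem_anSet_of_mem (by simp [ha])), hp x p.end_mem_support⟩

lemma not_isLeft_of_mem (hsep : cgCI H A B C) (hb : b ∈ B) : ¬ IsLeft H A B C b := by
  rintro ⟨a, ha, p, hp⟩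
  obtain ⟨c, hc, hcp⟩ := hsep a ha b hb p fun _ _ => mem_univ _
  exact hp c hcp hc

lemma Opposed.symm (h : Opposed H A B C x y) : Opposed H A B C y x :=
  ⟨h.2.1, h.1, fun h' => h.2.2 h'.symm⟩

lemma not_opposed_self : ¬ Opposed H A B C x x := fun h => h.2.2 Iff.rfl

lemma not_opposed_trans (hw : w ∈ anSet H (A ∪ B ∪ C) \ C) (hxw : ¬ Opposed H A B C x w)
    (hwy : ¬ Opposed H A B C w y) : ¬ Opposed H A B C x y := by
  unfold Opposed at *
  tauto

lemma not_opposed_of_reflTransGen {r : V → V → Prop} (hr : ∀ a b, r a b → ¬ Opposed H A B C a b)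
    (hmem : ∀ b, ReflTransGen r x b → b ∈ anSet H (A ∪ B ∪ C) \ C) (h : ReflTransGen r x y) :
    ¬ Opposed H A B C x y := by
  induction h with
  | refl => exact not_opposed_self
  | tail hxb hbc ih => exact not_opposed_trans (hmem _ hxb) ih (hr _ _ hbc)

lemma not_opposed_of_ancMoral_adj (h : (ancMoral H (A ∪ B ∪ C)).Adj x y) :
    ¬ Opposed H A B C x y := by
  rintro ⟨hx, hy, hxy⟩
  exact hxy ⟨fun hl => hl.step h (mem_sdiff.1 hy).2, fun hl => hl.step h.symm (mem_sdiff.1 hx).2⟩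

lemma not_opposed_of_adj (h : H.Adj x y) : ¬ Opposed H A B C x y := fun hO =>
  not_opposed_of_ancMoral_adj
    (moralG_adj_of_adj ⟨h, (mem_sdiff.1 hO.1).1, (mem_sdiff.1 hO.2.1).1⟩) hO

lemma not_opposed_of_mem_paSet (hH : IsChainGraph H) (hk : k ∈ anSet H (A ∪ B ∪ C))
    (hx : x ∈ paSet H (chainComp H k)) (hy : y ∈ paSet H (chainComp H k)) :
    ¬ Opposed H A B C x y := by
  by_cases hxy : x = y
  · exact hxy ▸ not_opposed_self
  obtain ⟨-, b₁, hb₁, hxb₁⟩ := mem_paSet.1 hx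
  obtain ⟨-, b₂, hb₂, hyb₂⟩ := mem_paSet.1 hy
  rw [mem_chainComp] at hb₁ hb₂
  have hb₁T := mem_anSet_of_reachable hb₁.symm hk
  have hb₂T := mem_anSet_of_reachable hb₂.symm hk
  refine not_opposed_of_ancMoral_adj
    ((moralG_adj_iff hH.induced).2 ⟨hxy, .inr (.inr ⟨b₁, b₂, ?_, ?_, ?_⟩)⟩)
  · exact inducedM_dirEdge_iff.2 ⟨hxb₁, mem_anSet_of_adj hxb₁.1 hb₁T, hb₁T⟩
  · exact inducedM_dirEdge_iff.2 ⟨hyb₂, mem_anSet_of_adj hyb₂.1 hb₂T, hb₂T⟩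
  · exact reachable_inducedM_anSet hb₁T (hb₁.symm.trans hb₂)

lemma not_opposed_of_reachable (h : H.ugPart.Reachable u v)
    (hC : ∀ w ∈ chainComp H u, w ∉ C) : ¬ Opposed H A B C u v := by
  by_cases hu : u ∈ anSet H (A ∪ B ∪ C)
  · refine not_opposed_of_reflTransGen (fun a b hab => not_opposed_of_adj hab.1) (fun b hb => ?_)
      ((SimpleGraph.reachable_iff_reflTransGen _ _).1 h)
    have hub : H.ugPart.Reachable u b := (SimpleGraph.reachable_iff_reflTransGen _ _).2 hb
    exact mem_sdiff.2 ⟨mem_anSet_of_reachable hub.symm hu, hC b (mem_chainComp.2 hub)⟩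
  · exact fun hO => hu (mem_sdiff.1 hO.1).1

end Sides

section Fill

variable {H : MixedGraph V} {A B C : Finset V} {x y : V}

variable (H A B C) in
def sepFill : MixedGraph V where
  Adj x y := ¬ Opposed H A B C x y ∧
    (x ≠ y ∧ H.ugPart.Reachable x y ∨ x ∈ paSet H (chainComp H y))
  irrefl a h := by
    rcases h.2 with h | h
    · exact h.1 rfl
    · exact (mem_paSet.1 h).1 (mem_chainComp.2 .rfl)

lemma reflTransGen_of_sepFill_adj (h : (sepFill H A B C).Adj x y) : ReflTransGen H.Adj x y := by
  rcases h.2 with ⟨-, h⟩ | h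
  exacts [reflTransGen_of_reachable h, reflTransGen_of_mem_paSet h]

lemma mem_paSet_of_sepFill_dirEdge (h : (sepFill H A B C).DirEdge x y) :
    x ∈ paSet H (chainComp H y) := by
  rcases h.1.2 with ⟨hne, hr⟩ | hx
  · exact absurd ⟨fun hO => h.1.1 hO.symm, .inl ⟨hne.symm, hr.symm⟩⟩ h.2
  · exact hx

variable (hH : IsChainGraph H)
include hH

lemma sepFill_adj_of_adj (h : H.Adj x y) : (sepFill H A B C).Adj x y := by
  refine ⟨not_opposed_of_adj h, ?_⟩
  by_cases hyx : H.Adj y x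
  · exact .inl ⟨fun hxy => H.irrefl x (hxy ▸ h), MixedGraph.UndirEdge.reachable ⟨h, hyx⟩⟩
  · exact .inr (mem_paSet.2 ⟨fun hr => hH.not_reachable ⟨h, hyx⟩ (mem_chainComp.1 hr).symm,
      y, mem_chainComp.2 .rfl, h, hyx⟩)

lemma sepFill_undirEdge_of_undirEdge (h : H.UndirEdge x y) : (sepFill H A B C).UndirEdge x y :=
  ⟨sepFill_adj_of_adj hH h.1, sepFill_adj_of_adj hH h.2⟩

lemma sepFill_dirEdge_of_dirEdge (h : H.DirEdge x y) : (sepFill H A B C).DirEdge x y :=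
  ⟨sepFill_adj_of_adj hH h.1, fun hyx => hH x y h (reflTransGen_of_sepFill_adj hyx)⟩

lemma reachable_of_sepFill_undirEdge (h : (sepFill H A B C).UndirEdge x y) :
    H.ugPart.Reachable x y := by
  rcases h.1.2 with ⟨-, h'⟩ | hx
  · exact h'
  · rcases h.2.2 with ⟨-, h'⟩ | hy
    · exact h'.symm
    · exact absurd (reflTransGen_of_mem_paSet hy) (hH.not_reflTransGen_of_mem_paSet hx)

lemma reachable_sepFill_iff :
    (sepFill H A B C).ugPart.Reachable x y ↔ H.ugPart.Reachable x y := by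
  refine ⟨fun h => ?_, fun h => h.mono fun a b (hab : H.ugPart.Adj a b) =>
    ⟨sepFill_adj_of_adj hH hab.1, sepFill_adj_of_adj hH hab.2⟩⟩
  rw [SimpleGraph.reachable_iff_reflTransGen] at h
  induction h with
  | refl => rfl
  | tail _ hbc ih => exact ih.trans (reachable_of_sepFill_undirEdge hH ⟨hbc.1, hbc.2⟩)

lemma anSet_sepFill (S : Finset V) : anSet (sepFill H A B C) S = anSet H S :=
  (anSet_subset_anSet fun _ _ h => reflTransGen_of_sepFill_adj h).antisymm
    (anSet_subset_anSet fun _ _ h => .single (sepFill_adj_of_adj hH h))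

lemma isChainGraph_sepFill : IsChainGraph (sepFill H A B C) := fun _ _ h hyx =>
  hH.not_reflTransGen_of_mem_paSet (mem_paSet_of_sepFill_dirEdge h)
    (ReflTransGen.lift' id (fun _ _ h => reflTransGen_of_sepFill_adj h) _ _ hyx)

end Fill

section Orientation

variable {H : MixedGraph V} {A B C S : Finset V} {g k m p u v w x y z : V}

variable (H C) in
/-- Ancestors first; within a chain component, the vertices of `C` first. -/
noncomputable def sepKey (v : V) : ℕ ×ₗ Fin (Fintype.card V) :=
  toLex (2 * height H v + if v ∈ C then 0 else 1, Fintype.equivFin V v)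

variable (H A B C) in
noncomputable abbrev sepDAG : MixedGraph V := (sepFill H A B C).orient (sepKey H C)

variable (H C) in
def IsCompMin (m v : V) : Prop :=
  m ∈ chainComp H v ∧ ∀ u ∈ chainComp H v, sepKey H C m ≤ sepKey H C u

lemma sepKey_injective : Function.Injective (sepKey H C) := fun _ _ h =>
  (Fintype.equivFin V).injective (Prod.ext_iff.1 (toLex_inj.1 h)).2

lemma sepKey_lt_of_mem_of_not_mem (h : H.ugPart.Reachable x y) (hx : x ∈ C) (hy : y ∉ C) :
    sepKey H C x < sepKey H C y := by
  have := height_eq (reflTransGen_of_reachable h) (reflTransGen_of_reachable h.symm)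
  refine Prod.Lex.toLex_lt_toLex.2 (.inl ?_)
  simp only [hx, hy, if_true, if_false]
  omega

lemma mem_of_sepKey_lt (h : H.ugPart.Reachable x y) (hlt : sepKey H C x < sepKey H C y)
    (hy : y ∈ C) : x ∈ C :=
  by_contra fun hx => lt_asymm hlt (sepKey_lt_of_mem_of_not_mem h.symm hy hx)

lemma sepKey_lt_of_mem_paSet (hH : IsChainGraph H) (h : x ∈ paSet H (chainComp H y)) :
    sepKey H C x < sepKey H C y := by
  have := height_lt (reflTransGen_of_mem_paSet h) (hH.not_reflTransGen_of_mem_paSet h)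
  refine Prod.Lex.toLex_lt_toLex.2 (.inl ?_)
  split_ifs <;> omega

lemma sepDAG_adj_or (hH : IsChainGraph H) (h : (sepFill H A B C).Adj x y) :
    (sepDAG H A B C).Adj x y ∨ (sepDAG H A B C).Adj y x := by
  rcases lt_trichotomy (sepKey H C x) (sepKey H C y) with hlt | heq | hlt
  · exact .inl ⟨h, hlt⟩
  · exact absurd h (sepKey_injective heq ▸ (sepFill H A B C).irrefl x)
  · refine .inr ⟨?_, hlt⟩
    by_contra hyx
    exact lt_asymm hlt (sepKey_lt_of_mem_paSet hH (mem_paSet_of_sepFill_dirEdge ⟨h, hyx⟩))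

lemma exists_isCompMin (v : V) : ∃ m, IsCompMin H C m v :=
  let ⟨m, hm, hmin⟩ := (chainComp H v).exists_min_image (sepKey H C) ⟨v, mem_chainComp.2 .rfl⟩
  ⟨m, hm, hmin⟩

lemma IsCompMin.of_reachable (hm : IsCompMin H C m v) (h : H.ugPart.Reachable v w) :
    IsCompMin H C m w := by
  rwa [IsCompMin, ← chainComp_eq_of_reachable h]

lemma IsCompMin.reachable (hm : IsCompMin H C m v) (hu : u ∈ chainComp H v) :
    H.ugPart.Reachable m u :=
  (mem_chainComp.1 hm.1).symm.trans (mem_chainComp.1 hu)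

lemma IsCompMin.not_mem (hm : IsCompMin H C m v) (hmC : m ∉ C) (hw : w ∈ chainComp H v) :
    w ∉ C := fun hwC =>
  (sepKey_lt_of_mem_of_not_mem (hm.reachable hw).symm hwC hmC).not_ge (hm.2 w hw)

lemma IsCompMin.not_opposed (hm : IsCompMin H C m v) (hu : u ∈ chainComp H v) :
    ¬ Opposed H A B C m u := by
  by_cases hmC : m ∈ C
  · exact fun hO => (mem_sdiff.1 hO.1).2 hmC
  · refine not_opposed_of_reachable (hm.reachable hu) fun w hw => hm.not_mem hmC ?_
    rwa [chainComp_eq_of_reachable (hm.reachable (mem_chainComp.2 .rfl))] at hw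

lemma IsCompMin.sepDAG_adj (hm : IsCompMin H C m v) (hu : u ∈ chainComp H v) (hne : m ≠ u) :
    (sepDAG H A B C).Adj m u :=
  ⟨⟨hm.not_opposed hu, .inl ⟨hne, hm.reachable hu⟩⟩,
    (hm.2 u hu).lt_of_ne (sepKey_injective.ne hne)⟩

lemma IsCompMin.sepDAG_adj_of_mem_paSet (hH : IsChainGraph H) (hm : IsCompMin H C m v)
    (hp : p ∈ paSet H (chainComp H v)) : (sepDAG H A B C).Adj p m := by
  have hpm : p ∈ paSet H (chainComp H m) := by
    rwa [chainComp_eq_of_reachable (hm.reachable (mem_chainComp.2 .rfl))]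
  refine ⟨⟨fun hO => ?_, .inr hpm⟩, sepKey_lt_of_mem_paSet hH hpm⟩
  obtain ⟨-, b, hb, hpb⟩ := mem_paSet.1 hp
  obtain ⟨hmT, hmC⟩ := mem_sdiff.1 hO.2.1
  have hb' : b ∈ anSet H (A ∪ B ∪ C) \ C :=
    mem_sdiff.2 ⟨mem_anSet_of_reachable (hm.reachable hb).symm hmT, hm.not_mem hmC hb⟩
  exact not_opposed_trans hb' (not_opposed_of_adj hpb.1) (fun h => hm.not_opposed hb h.symm) hO

lemma anSet_sepDAG_subset : anSet (sepDAG H A B C) S ⊆ anSet H S :=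
  anSet_subset_anSet fun _ _ h => reflTransGen_of_sepFill_adj h.1

lemma IsCompMin.mem_anSet_sepDAG_of_mem (hm : IsCompMin H C m v)
    (hv : v ∈ anSet (sepDAG H A B C) S) : m ∈ anSet (sepDAG H A B C) S := by
  by_cases hmv : m = v
  · exact hmv ▸ hv
  · exact mem_anSet_of_adj (hm.sepDAG_adj (mem_chainComp.2 .rfl) hmv) hv

lemma IsCompMin.mem_anSet_sepDAG (hH : IsChainGraph H) (hm : IsCompMin H C m v)
    (hv : v ∈ anSet H S) : m ∈ anSet (sepDAG H A B C) S := by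
  obtain ⟨k, hk, hvk⟩ := mem_anSet.1 hv
  clear hv
  induction hvk using ReflTransGen.head_induction_on generalizing m with
  | refl => exact hm.mem_anSet_sepDAG_of_mem (mem_anSet_of_mem hk)
  | @head a c hac _ ih =>
    by_cases hr : H.ugPart.Reachable a c
    · exact ih (hm.of_reachable hr)
    · obtain ⟨m', hm'⟩ := exists_isCompMin (H := H) (C := C) c
      have hpa : a ∈ paSet H (chainComp H c) := mem_paSet.2 ⟨fun h => hr (mem_chainComp.1 h).symm,
        c, mem_chainComp.2 .rfl, hac, fun hca => hr (MixedGraph.UndirEdge.reachable ⟨hac, hca⟩)⟩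
      exact hm.mem_anSet_sepDAG_of_mem
        (mem_anSet_of_adj (hm'.sepDAG_adj_of_mem_paSet hH hpa) (ih hm'))

lemma mem_anSet_sepDAG_of_mem_paSet (hH : IsChainGraph H) (hp : p ∈ paSet H (chainComp H v))
    (hv : v ∈ anSet H S) : p ∈ anSet (sepDAG H A B C) S :=
  let ⟨_, hm⟩ := exists_isCompMin (H := H) (C := C) v
  mem_anSet_of_adj (hm.sepDAG_adj_of_mem_paSet hH hp) (hm.mem_anSet_sepDAG hH hv)

lemma mem_anSet_sepDAG_of_mem (hg : g ∈ C) (hgz : H.ugPart.Reachable g z)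
    (hz : z ∈ anSet (sepDAG H A B C) S) (hzC : z ∉ C) : g ∈ anSet (sepDAG H A B C) S :=
  mem_anSet_of_adj ⟨⟨fun hO => (mem_sdiff.1 hO.1).2 hg, .inl ⟨ne_of_mem_of_not_mem hg hzC, hgz⟩⟩,
    sepKey_lt_of_mem_of_not_mem hgz hg hzC⟩ hz

end Orientation

section Equivalence

variable {H : MixedGraph V} {A B C S : Finset V} {k s u w x y z : V} (hH : IsChainGraph H)
include hH

lemma ancMoral_sepFill_adj (h : (ancMoral (sepFill H A B C) S).Adj x y) :
    x ∈ anSet H S ∧ y ∈ anSet H S ∧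
      ((sepFill H A B C).Adj x y ∨ (sepFill H A B C).Adj y x ∨
        ∃ k ∈ anSet H S, x ∈ paSet H (chainComp H k) ∧ y ∈ paSet H (chainComp H k)) := by
  have hmem := mem_of_moralG_inducedM_adj h
  rw [anSet_sepFill hH] at hmem
  refine ⟨hmem.1, hmem.2, ?_⟩
  rcases ((moralG_adj_iff (isChainGraph_sepFill hH).induced).1 h).2 with
    h | h | ⟨k₁, k₂, hxk₁, hyk₂, hk⟩
  · exact .inl h.1
  · exact .inr (.inl h.1)
  · obtain ⟨hxk₁, -, hk₁⟩ := inducedM_dirEdge_iff.1 hxk₁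
    obtain ⟨hyk₂, -, -⟩ := inducedM_dirEdge_iff.1 hyk₂
    have hk' := (reachable_sepFill_iff hH).1 (reachable_of_reachable_inducedM hk)
    refine .inr (.inr ⟨k₁, anSet_sepFill hH S ▸ hk₁, mem_paSet_of_sepFill_dirEdge hxk₁, ?_⟩)
    rw [chainComp_eq_of_reachable hk']
    exact mem_paSet_of_sepFill_dirEdge hyk₂

lemma ancMoral_sepFill_adj_of_adj (h : (sepFill H A B C).Adj x y) (hx : x ∈ anSet H S)
    (hy : y ∈ anSet H S) : (ancMoral (sepFill H A B C) S).Adj x y :=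
  ancMoral_adj_of_adj h (by rwa [anSet_sepFill hH]) (by rwa [anSet_sepFill hH])

lemma ancMoral_sepFill_adj_of_mem_paSet (hk : k ∈ anSet H S) (hx : x ∈ paSet H (chainComp H k))
    (hy : y ∈ paSet H (chainComp H k)) (hne : x ≠ y) :
    (ancMoral (sepFill H A B C) S).Adj x y := by
  obtain ⟨-, b₁, hb₁, hxb₁⟩ := mem_paSet.1 hx
  obtain ⟨-, b₂, hb₂, hyb₂⟩ := mem_paSet.1 hy
  rw [mem_chainComp] at hb₁ hb₂
  have hb₁S : b₁ ∈ anSet (sepFill H A B C) S :=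
    anSet_sepFill hH S ▸ mem_anSet_of_reachable hb₁.symm hk
  have hb₂S : b₂ ∈ anSet (sepFill H A B C) S :=
    anSet_sepFill hH S ▸ mem_anSet_of_reachable hb₂.symm hk
  refine (moralG_adj_iff (isChainGraph_sepFill hH).induced).2
    ⟨hne, .inr (.inr ⟨b₁, b₂, ?_, ?_, ?_⟩)⟩
  · exact inducedM_dirEdge_iff.2 ⟨sepFill_dirEdge_of_dirEdge hH hxb₁,
      mem_anSet_of_adj (sepFill_adj_of_adj hH hxb₁.1) hb₁S, hb₁S⟩
  · exact inducedM_dirEdge_iff.2 ⟨sepFill_dirEdge_of_dirEdge hH hyb₂,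
      mem_anSet_of_adj (sepFill_adj_of_adj hH hyb₂.1) hb₂S, hb₂S⟩
  · exact reachable_inducedM_anSet hb₁S ((reachable_sepFill_iff hH).2 (hb₁.symm.trans hb₂))

omit hH in
lemma ancMoral_sepDAG_adj (h : (ancMoral (sepDAG H A B C) S).Adj x y) :
    x ∈ anSet (sepDAG H A B C) S ∧ y ∈ anSet (sepDAG H A B C) S ∧
      ((sepDAG H A B C).Adj x y ∨ (sepDAG H A B C).Adj y x ∨
        ∃ w ∈ anSet (sepDAG H A B C) S, (sepDAG H A B C).Adj x w ∧ (sepDAG H A B C).Adj y w) := by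
  refine ⟨(mem_of_moralG_inducedM_adj h).1, (mem_of_moralG_inducedM_adj h).2, ?_⟩
  rcases ((moralG_adj_iff (MixedGraph.isDAG_orient _).2.induced).1 h).2 with
    h | h | ⟨k₁, k₂, hxk₁, hyk₂, hk⟩
  · exact .inl h.1
  · exact .inr (.inl h.1)
  · obtain rfl := MixedGraph.eq_of_reachable_orient (reachable_of_reachable_inducedM hk)
    obtain ⟨hxk, -, hk⟩ := inducedM_dirEdge_iff.1 hxk₁
    exact .inr (.inr ⟨k₁, hk, hxk.1, (inducedM_dirEdge_iff.1 hyk₂).1.1⟩)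

omit hH in
lemma ancMoral_sepDAG_adj_of_adj_of_adj (hxw : (sepDAG H A B C).Adj x w)
    (hyw : (sepDAG H A B C).Adj y w) (hw : w ∈ anSet (sepDAG H A B C) S) (hne : x ≠ y) :
    (ancMoral (sepDAG H A B C) S).Adj x y := by
  have hdir : ∀ {z}, (sepDAG H A B C).Adj z w →
      (inducedM (sepDAG H A B C) (anSet (sepDAG H A B C) S)).DirEdge z w := fun h =>
    inducedM_dirEdge_iff.2
      ⟨(⟨h, fun h' => lt_asymm h.2 h'.2⟩ : (sepDAG H A B C).DirEdge _ w), mem_anSet_of_adj h hw, hw⟩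
  exact (moralG_adj_iff (MixedGraph.isDAG_orient _).2.induced).2
    ⟨hne, .inr (.inr ⟨w, w, hdir hxw, hdir hyw, .rfl⟩)⟩

lemma ancMoral_sepDAG_adj_of_sepFill_adj (h : (sepFill H A B C).Adj x y)
    (hx : x ∈ anSet (sepDAG H A B C) S) (hy : y ∈ anSet (sepDAG H A B C) S) :
    (ancMoral (sepDAG H A B C) S).Adj x y := by
  rcases sepDAG_adj_or hH h with h | h
  · exact ancMoral_adj_of_adj h hx hy
  · exact (ancMoral_adj_of_adj h hy hx).symm

omit hH in
lemma not_opposed_of_sepKey_lt (hxw : H.ugPart.Reachable x w) (hlt : sepKey H C x < sepKey H C w)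
    (hxw' : ¬ Opposed H A B C x w) (hyw : ¬ Opposed H A B C y w) : ¬ Opposed H A B C x y := by
  intro hO
  obtain ⟨hxT, hxC⟩ := mem_sdiff.1 hO.1
  have hw : w ∈ anSet H (A ∪ B ∪ C) \ C := mem_sdiff.2
    ⟨mem_anSet_of_reachable hxw.symm hxT, fun hwC => hxC (mem_of_sepKey_lt hxw hlt hwC)⟩
  exact not_opposed_trans hw hxw' (fun h => hyw h.symm) hO

lemma ancMoral_sepFill_adj_of_ancMoral_sepDAG_adj (h : (ancMoral (sepDAG H A B C) S).Adj x y) :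
    (ancMoral (sepFill H A B C) S).Adj x y := by
  obtain ⟨hx, hy, hxy | hyx | ⟨w, hw, hxw, hyw⟩⟩ := ancMoral_sepDAG_adj h
  · exact ancMoral_sepFill_adj_of_adj hH hxy.1 (anSet_sepDAG_subset hx) (anSet_sepDAG_subset hy)
  · exact (ancMoral_sepFill_adj_of_adj hH hyx.1 (anSet_sepDAG_subset hy)
      (anSet_sepDAG_subset hx)).symm
  rcases hxw.1.2 with ⟨-, hxw'⟩ | hxp <;> rcases hyw.1.2 with ⟨-, hyw'⟩ | hyp
  · exact ancMoral_sepFill_adj_of_adj hH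
      ⟨not_opposed_of_sepKey_lt hxw' hxw.2 hxw.1.1 hyw.1.1, .inl ⟨h.ne, hxw'.trans hyw'.symm⟩⟩
      (anSet_sepDAG_subset hx) (anSet_sepDAG_subset hy)
  · refine (ancMoral_sepFill_adj_of_adj hH ⟨fun hO =>
      not_opposed_of_sepKey_lt hxw' hxw.2 hxw.1.1 hyw.1.1 hO.symm, .inr ?_⟩
      (anSet_sepDAG_subset hy) (anSet_sepDAG_subset hx)).symm
    rwa [chainComp_eq_of_reachable hxw']
  · refine ancMoral_sepFill_adj_of_adj hH ⟨fun hO =>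
      not_opposed_of_sepKey_lt hyw' hyw.2 hyw.1.1 hxw.1.1 hO.symm, .inr ?_⟩
      (anSet_sepDAG_subset hx) (anSet_sepDAG_subset hy)
    rwa [chainComp_eq_of_reachable hyw']
  · exact ancMoral_sepFill_adj_of_mem_paSet hH (anSet_sepDAG_subset hw) hxp hyp h.ne

lemma ancMoral_sepDAG_adj_of_ancMoral_sepFill_adj (h : (ancMoral (sepFill H A B C) S).Adj x y)
    (hx : x ∈ anSet (sepDAG H A B C) S) (hy : y ∈ anSet (sepDAG H A B C) S) :
    (ancMoral (sepDAG H A B C) S).Adj x y := by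
  obtain ⟨-, -, hxy | hyx | ⟨k, hk, hxk, hyk⟩⟩ := ancMoral_sepFill_adj hH h
  · exact ancMoral_sepDAG_adj_of_sepFill_adj hH hxy hx hy
  · exact (ancMoral_sepDAG_adj_of_sepFill_adj hH hyx hy hx).symm
  · obtain ⟨m, hm⟩ := exists_isCompMin (H := H) (C := C) k
    exact ancMoral_sepDAG_adj_of_adj_of_adj (hm.sepDAG_adj_of_mem_paSet hH hxk)
      (hm.sepDAG_adj_of_mem_paSet hH hyk) (hm.mem_anSet_sepDAG hH hk) h.ne

lemma sepFill_adj_of_ancMoral_adj_of_not_mem (h : (ancMoral (sepFill H A B C) S).Adj u x)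
    (hx : x ∉ anSet (sepDAG H A B C) S) : (sepFill H A B C).Adj u x := by
  obtain ⟨hu, -, hux | hxu | ⟨k, hk, -, hxk⟩⟩ := ancMoral_sepFill_adj hH h
  · exact hux
  · by_contra hux
    exact hx (mem_anSet_sepDAG_of_mem_paSet hH (mem_paSet_of_sepFill_dirEdge ⟨hxu, hux⟩) hu)
  · exact absurd (mem_anSet_sepDAG_of_mem_paSet hH hxk hk) hx

lemma reachable_of_reflTransGen_outside (h : ReflTransGen (fun a b =>
      (ancMoral (sepFill H A B C) S).Adj a b ∧
        a ∉ anSet (sepDAG H A B C) S ∧ b ∉ anSet (sepDAG H A B C) S) x y) :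
    H.ugPart.Reachable x y := by
  induction h with
  | refl => rfl
  | tail _ hbc ih => exact ih.trans (reachable_of_sepFill_undirEdge hH
      ⟨sepFill_adj_of_ancMoral_adj_of_not_mem hH hbc.1 hbc.2.2,
        sepFill_adj_of_ancMoral_adj_of_not_mem hH hbc.1.symm hbc.2.1⟩)

/-- The vertices of `C` in the component of the detour precede `s`, so they lie in the ancestral
set of the DAG; hence the detour avoids `C` and stays on one side. -/
lemma not_opposed_of_bypass (hs : s = u ∨ s = z) (hsx : H.ugPart.Reachable s x)
    (hsS : s ∈ anSet (sepDAG H A B C) S) (hux : ¬ Opposed H A B C u x)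
    (hyz : ¬ Opposed H A B C y z) (hxy : ReflTransGen (fun a b =>
      (ancMoral (sepFill H A B C) S).Adj a b ∧
        a ∉ anSet (sepDAG H A B C) S ∧ b ∉ anSet (sepDAG H A B C) S) x y)
    (hx : x ∉ anSet (sepDAG H A B C) S) (hy : y ∉ anSet (sepDAG H A B C) S) :
    ¬ Opposed H A B C u z := by
  intro hO
  obtain ⟨hsT, hsC⟩ : s ∈ anSet H (A ∪ B ∪ C) ∧ s ∉ C := by
    rcases hs with rfl | rfl
    exacts [mem_sdiff.1 hO.1, mem_sdiff.1 hO.2.1]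
  have hcomp : ∀ b, H.ugPart.Reachable x b → b ∉ anSet (sepDAG H A B C) S →
      b ∈ anSet H (A ∪ B ∪ C) \ C := fun b hb hbS =>
    mem_sdiff.2 ⟨mem_anSet_of_reachable (hsx.trans hb).symm hsT,
      fun hbC => hbS (mem_anSet_sepDAG_of_mem hbC (hsx.trans hb).symm hsS hsC)⟩
  have hxy' : ¬ Opposed H A B C x y := by
    refine not_opposed_of_reflTransGen
      (fun a b hab => (sepFill_adj_of_ancMoral_adj_of_not_mem hH hab.1 hab.2.2).1)
      (fun b hb => hcomp b (reachable_of_reflTransGen_outside hH hb) ?_) hxy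
    rcases hb.cases_tail with rfl | ⟨c, -, hcb⟩
    exacts [hx, hcb.2.2]
  exact not_opposed_trans (hcomp y (reachable_of_reflTransGen_outside hH hxy) hy)
    (not_opposed_trans (hcomp x .rfl hx) hux hxy') hyz hO

lemma ancMoral_sepDAG_bypass (hu : u ∈ anSet (sepDAG H A B C) S)
    (hz : z ∈ anSet (sepDAG H A B C) S) (hx : x ∉ anSet (sepDAG H A B C) S)
    (hy : y ∉ anSet (sepDAG H A B C) S) (hux : (ancMoral (sepFill H A B C) S).Adj u x)
    (hyz : (ancMoral (sepFill H A B C) S).Adj y z) (hxy : ReflTransGen (fun a b =>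
      (ancMoral (sepFill H A B C) S).Adj a b ∧
        a ∉ anSet (sepDAG H A B C) S ∧ b ∉ anSet (sepDAG H A B C) S) x y) :
    u = z ∨ (ancMoral (sepDAG H A B C) S).Adj u z := by
  by_cases huz : u = z
  · exact .inl huz
  right
  have hux' := sepFill_adj_of_ancMoral_adj_of_not_mem hH hux hx
  have hzy' := sepFill_adj_of_ancMoral_adj_of_not_mem hH hyz.symm hy
  have hxy' := reachable_of_reflTransGen_outside hH hxy
  have hyz' : ¬ Opposed H A B C y z := fun hO => hzy'.1 hO.symm
  rcases hux'.2 with ⟨-, hux''⟩ | hup <;> rcases hzy'.2 with ⟨-, hzy''⟩ | hzp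
  · exact ancMoral_sepDAG_adj_of_sepFill_adj hH
      ⟨not_opposed_of_bypass hH (.inl rfl) hux'' hu hux'.1 hyz' hxy hx hy,
        .inl ⟨huz, hux''.trans (hxy'.trans hzy''.symm)⟩⟩ hu hz
  · refine (ancMoral_sepDAG_adj_of_sepFill_adj hH ⟨fun hO =>
      not_opposed_of_bypass hH (.inl rfl) hux'' hu hux'.1 hyz' hxy hx hy hO.symm, .inr ?_⟩
      hz hu).symm
    rwa [chainComp_eq_of_reachable (hux''.trans hxy')]
  · refine ancMoral_sepDAG_adj_of_sepFill_adj hH ⟨not_opposed_of_bypass hH (.inr rfl)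
      (hzy''.trans hxy'.symm) hz hux'.1 hyz' hxy hx hy, .inr ?_⟩ hu hz
    rwa [chainComp_eq_of_reachable (hzy''.trans hxy'.symm)]
  · obtain ⟨m, hm⟩ := exists_isCompMin (H := H) (C := C) x
    refine ancMoral_sepDAG_adj_of_adj_of_adj (hm.sepDAG_adj_of_mem_paSet hH hup)
      (hm.sepDAG_adj_of_mem_paSet hH ?_) (hm.mem_anSet_sepDAG hH (ancMoral_sepFill_adj hH hux).2.1)
      huz
    rwa [chainComp_eq_of_reachable hxy']

theorem cgCI_sepFill_iff (A' B' C' : Finset V) :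
    cgCI (sepFill H A B C) A' B' C' ↔ cgCI (sepDAG H A B C) A' B' C' := by
  refine ⟨fun h => h.of_walks fun _ _ _ _ w =>
      ⟨w.mapLe fun _ _ => ancMoral_sepFill_adj_of_ancMoral_sepDAG_adj hH, by simp⟩,
    fun h => h.of_walks fun a ha b hb w => ?_⟩
  exact w.exists_support_subset_of_bypass
    (P := {v | v ∈ anSet (sepDAG H A B C) (A' ∪ B' ∪ C')})
    (fun _ _ hu hz h => ancMoral_sepDAG_adj_of_ancMoral_sepFill_adj hH h hu hz)
    (fun _ _ _ _ hu hz hx hy => ancMoral_sepDAG_bypass hH hu hz hx hy)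
    (mem_anSet_of_mem (by simp [ha])) (mem_anSet_of_mem (by simp [hb]))

theorem isCGTri_sepFill : IsCGTri H (sepFill H A B C) :=
  ⟨isChainGraph_sepFill hH, fun _ _ => sepFill_undirEdge_of_undirEdge hH,
    fun _ _ => sepFill_dirEdge_of_dirEdge hH, sepDAG H A B C, MixedGraph.isDAG_orient _,
    fun A' B' C' _ => cgCI_sepFill_iff hH A' B' C'⟩

end Equivalence

section Sandwich

variable {H G : MixedGraph V} {A B C S : Finset V} {a b x y : V}
  (hsub : mEdges G ⊆ mEdges (sepFill H A B C))
include hsub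

lemma sepFill_adj_of_subset (h : G.Adj a b) : (sepFill H A B C).Adj a b :=
  hsub (show (a, b) ∈ mEdges G from h)

lemma anSet_subset_of_subset_sepFill : anSet G S ⊆ anSet H S :=
  anSet_subset_anSet fun _ _ h => reflTransGen_of_sepFill_adj (sepFill_adj_of_subset hsub h)

variable (hH : IsChainGraph H)
include hH

lemma reachable_of_subset_sepFill (h : G.ugPart.Reachable a b) : H.ugPart.Reachable a b := by
  rw [SimpleGraph.reachable_iff_reflTransGen] at h
  induction h with
  | refl => rfl
  | tail _ hbc ih => exact ih.trans (reachable_of_sepFill_undirEdge hH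
      ⟨sepFill_adj_of_subset hsub hbc.1, sepFill_adj_of_subset hsub hbc.2⟩)

variable (hG : IsChainGraph G) (hHG : ∀ a b, H.UndirEdge a b → G.UndirEdge a b)
include hG hHG

lemma mem_paSet_of_subset_sepFill (h : G.DirEdge a b) : a ∈ paSet H (chainComp H b) := by
  refine mem_paSet_of_sepFill_dirEdge ⟨sepFill_adj_of_subset hsub h.1, fun hba => ?_⟩
  have hab := reachable_of_sepFill_undirEdge hH ⟨sepFill_adj_of_subset hsub h.1, hba⟩
  exact hG a b h (reflTransGen_of_reachable
    (hab.mono fun _ _ (hcd : H.ugPart.Adj _ _) => hHG _ _ hcd).symm)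

lemma not_opposed_of_ancMoral_adj_of_subset_sepFill (h : (ancMoral G (A ∪ B ∪ C)).Adj x y) :
    ¬ Opposed H A B C x y := by
  rcases ((moralG_adj_iff hG.induced).1 h).2 with h | h | ⟨k₁, k₂, hxk₁, hyk₂, hk⟩
  · exact (sepFill_adj_of_subset hsub h.1).1
  · exact fun hO => (sepFill_adj_of_subset hsub h.1).1 hO.symm
  · obtain ⟨hxk₁, -, hk₁⟩ := inducedM_dirEdge_iff.1 hxk₁
    obtain ⟨hyk₂, -, -⟩ := inducedM_dirEdge_iff.1 hyk₂
    refine not_opposed_of_mem_paSet hH (anSet_subset_of_subset_sepFill hsub hk₁)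
      (mem_paSet_of_subset_sepFill hsub hH hG hHG hxk₁) ?_
    rw [chainComp_eq_of_reachable
      (reachable_of_subset_sepFill hsub hH (reachable_of_reachable_inducedM hk))]
    exact mem_paSet_of_subset_sepFill hsub hH hG hHG hyk₂

theorem cgCI_of_subset_sepFill (hsep : cgCI H A B C) : cgCI G A B C := by
  refine separatesIn_univ_of_closed (IsLeft H A B C) (fun _ ha haC => .of_mem ha haC)
    (fun x y hxy hx hyC => ?_) (fun _ hb => not_isLeft_of_mem hsep hb)
  have hyT := anSet_subset_of_subset_sepFill hsub (mem_of_moralG_inducedM_adj hxy).2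
  by_contra hy
  exact not_opposed_of_ancMoral_adj_of_subset_sepFill hsub hH hG hHG hxy
    ⟨hx.mem, mem_sdiff.2 ⟨hyT, hyC⟩, fun h => hy (h.1 hx)⟩

end Sandwich

theorem exists_isCGMinTri_subset {H G : MixedGraph V} (hG : IsCGTri H G) :
    ∃ G', IsCGMinTri H G' ∧ mEdges G' ⊆ mEdges G := by
  obtain ⟨_, ⟨G', hG', rfl, hsub⟩, hmin⟩ := (wellFounded_lt (α := Set (V × V))).has_min
    {E | ∃ G', IsCGTri H G' ∧ mEdges G' = E ∧ E ⊆ mEdges G} ⟨_, G, hG, rfl, subset_rfl⟩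
  exact ⟨G', ⟨hG', fun G'' hG'' hlt => hmin _ ⟨G'', hG'', rfl, hlt.subset.trans hsub⟩ hlt⟩, hsub⟩

theorem exists_cg_minimal_triangulation_separating_general
    {V : Type} [Fintype V] [DecidableEq V] (H : MixedGraph V)
    (hH : IsChainGraph H) (A B C : Finset V)
    (hsep : cgCI H A B C) :
    ∃ H' : MixedGraph V, IsCGMinTri H H' ∧ cgCI H' A B C := by
  obtain ⟨H', hmin, hsub⟩ :=
    exists_isCGMinTri_subset (isCGTri_sepFill (A := A) (B := B) (C := C) hH)
  exact ⟨H', hmin, cgCI_of_subset_sepFill hsub hH hmin.1.1 hmin.1.2.1 hsep⟩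

/-- For every chain graph `H` and every disjoint triplet
`(A,B,C) ∈ M_H`, there exists a minimal triangulation `H'` of `H` with
`(A,B,C) ∈ M_{H'}`. -/
theorem exists_cg_minimal_triangulation_separating
    {V : Type} [Fintype V] [DecidableEq V] (H : MixedGraph V)
    (hH : IsChainGraph H) (A B C : Finset V)
    (hABC : DisjointTriple A B C) (hsep : cgCI H A B C) :
    ∃ H' : MixedGraph V, IsCGMinTri H H' ∧ cgCI H' A B C :=
  exists_cg_minimal_triangulation_separating_general H hH A B C hsep
end
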